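/- arXiv:2209.14790 — 13 statements merged into one kernel-verified Lean document; each statement's English description precedes it below -/
import Mathlib

section
/- Let p, r ≥ 1 and let Y^1, …, Y^r be real symmetric p×p positive semidefinite matrices such that trace(Y^t) = 1 and rank(Y^t) = 1 for every t ∈ {1,…,r}. Then ∑_{t=1}^r Y^t ⪯ I if and only if ⟨Y^t, Y^{t'}⟩ = 0 for all t, t' ∈ {1,…,r} with t ≠ t'. -/
/-!
A positive semidefinite matrix of trace one and rank one has eigenvalues `1, 0, …, 0`, so it is
an orthogonal projection. For positive semidefinite `A` and `B`, `tr (A B) ≥ 0` with equality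
iff `A B = 0`. If `I - ∑ Y` is positive semidefinite, then
`0 ≤ tr (Yₜ (I - ∑ Y)) = -∑_{t' ≠ t} tr (Yₜ Yₜ')` forces every cross term to vanish. Conversely,
pairwise orthogonal projections sum to a projection `S`, and `I - S` is again a projection,
hence positive semidefinite.
-/

open Matrix

namespace Matrix

open scoped MatrixOrder ComplexOrder

variable {n 𝕜 : Type*} [Fintype n] [RCLike 𝕜]

theorem IsHermitian.isIdempotentElem_of_trace_eq_one_of_rank_eq_one [DecidableEq n]
    {A : Matrix n n 𝕜} (hA : A.IsHermitian) (htr : A.trace = 1) (hrk : A.rank = 1) :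
    IsIdempotentElem A := by
  obtain ⟨⟨a, _⟩, ha⟩ := Fintype.card_eq_one_iff.mp (hA.rank_eq_card_non_zero_eigs ▸ hrk)
  have hzero : ∀ i ≠ a, hA.eigenvalues i = 0 := fun i hi ↦
    by_contra fun h ↦ hi (congrArg Subtype.val (ha ⟨i, h⟩))
  have hone : hA.eigenvalues a = 1 := by
    rw [hA.trace_eq_sum_eigenvalues, Finset.sum_eq_single a (fun i _ hi ↦ by simp [hzero i hi])
      (by simp)] at htr
    exact_mod_cast htr
  have hidem : ∀ i, IsIdempotentElem (hA.eigenvalues i) := fun i ↦ by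
    obtain rfl | hi := eq_or_ne i a
    · exact hone ▸ IsIdempotentElem.one
    · exact hzero i hi ▸ IsIdempotentElem.zero
  rw [hA.spectral_theorem]
  refine IsIdempotentElem.map ?_ _
  rw [IsIdempotentElem, diagonal_mul_diagonal]
  congr 1 with i
  simp only [Function.comp_apply, ← RCLike.ofReal_mul, (hidem i).eq]

theorem PosSemidef.trace_mul_nonneg {A B : Matrix n n 𝕜} (hA : A.PosSemidef) (hB : B.PosSemidef) :
    0 ≤ (A * B).trace := by
  classical
  obtain ⟨C, rfl⟩ := CStarAlgebra.nonneg_iff_eq_star_mul_self.mp hA.nonneg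
  rw [mul_assoc, trace_mul_comm, star_eq_conjTranspose]
  exact (hB.mul_mul_conjTranspose_same C).trace_nonneg

theorem PosSemidef.trace_mul_eq_zero_iff {A B : Matrix n n 𝕜} (hA : A.PosSemidef)
    (hB : B.PosSemidef) : (A * B).trace = 0 ↔ A * B = 0 := by
  classical
  refine ⟨fun h ↦ ?_, fun h ↦ by rw [h, trace_zero]⟩
  obtain ⟨C, rfl⟩ := CStarAlgebra.nonneg_iff_eq_star_mul_self.mp hA.nonneg
  obtain ⟨D, rfl⟩ := CStarAlgebra.nonneg_iff_eq_star_mul_self.mp hB.nonneg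
  simp only [star_eq_conjTranspose] at h ⊢
  have hDC : D * Cᴴ = 0 := by
    rw [← trace_conjTranspose_mul_self_eq_zero_iff, ← h, conjTranspose_mul,
      conjTranspose_conjTranspose, ← mul_assoc, trace_mul_comm]
    simp only [mul_assoc]
  calc Cᴴ * C * (Dᴴ * D) = Cᴴ * (D * Cᴴ)ᴴ * D := by
        simp only [conjTranspose_mul, conjTranspose_conjTranspose, mul_assoc]
    _ = 0 := by rw [hDC, conjTranspose_zero, mul_zero, zero_mul]

variable [DecidableEq n] {ι : Type*} [Fintype ι] {P : ι → Matrix n n 𝕜}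

theorem trace_mul_eq_zero_of_one_sub_sum_posSemidef (hP : ∀ i, IsStarProjection (P i))
    (h : (1 - ∑ k, P k).PosSemidef) {i j : ι} (hij : i ≠ j) : (P i * P j).trace = 0 := by
  classical
  have hPi := (hP i).nonneg.posSemidef
  have hnonneg : ∀ k, 0 ≤ (P i * P k).trace := fun k ↦
    hPi.trace_mul_nonneg (hP k).nonneg.posSemidef
  -- `P i * (1 - ∑ P) = -∑_{k ≠ i} P i * P k`, since `P i * P i = P i`.
  have hsum : ∑ k ∈ Finset.univ.erase i, (P i * P k).trace ≤ 0 := by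
    have := hPi.trace_mul_nonneg h
    rwa [mul_sub, mul_one, Finset.mul_sum, trace_sub, trace_sum,
      ← Finset.add_sum_erase _ _ (Finset.mem_univ i), (hP i).isIdempotentElem.eq,
      sub_add_cancel_left, neg_nonneg] at this
  exact (Finset.sum_eq_zero_iff_of_nonneg fun k _ ↦ hnonneg k).mp
    (hsum.antisymm (Finset.sum_nonneg fun k _ ↦ hnonneg k)) j
    (Finset.mem_erase.mpr ⟨hij.symm, Finset.mem_univ j⟩)

theorem one_sub_sum_posSemidef_iff_pairwise_mul_eq_zero (hP : ∀ i, IsStarProjection (P i)) :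
    (1 - ∑ i, P i).PosSemidef ↔ Pairwise fun i j ↦ P i * P j = 0 := by
  refine ⟨fun h i j hij ↦ ?_, fun h ↦ ?_⟩
  · exact ((hP i).nonneg.posSemidef.trace_mul_eq_zero_iff (hP j).nonneg.posSemidef).mp
      (trace_mul_eq_zero_of_one_sub_sum_posSemidef hP h hij)
  · have hsum : IsStarProjection (∑ i, P i) :=
      ⟨OrthogonalIdempotents.isIdempotentElem_sum ⟨fun i ↦ (hP i).isIdempotentElem, h⟩,
        isSelfAdjoint_sum _ fun i _ ↦ (hP i).isSelfAdjoint⟩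
    exact hsum.one_sub.nonneg.posSemidef

end Matrix

theorem stmt0_general (p r : ℕ)
    (Y : Fin r → Matrix (Fin p) (Fin p) ℝ)
    (hpsd : ∀ t, (Y t).PosSemidef)
    (htr : ∀ t, (Y t).trace = 1)
    (hrank : ∀ t, (Y t).rank = 1) :
    (1 - ∑ t, Y t).PosSemidef ↔
      ∀ t t', t ≠ t' → ∑ i, ∑ j, Y t i j * Y t' i j = 0 := by
  have hproj : ∀ t, IsStarProjection (Y t) := fun t ↦
    ⟨(hpsd t).1.isIdempotentElem_of_trace_eq_one_of_rank_eq_one (htr t) (hrank t), (hpsd t).1⟩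
  have hinner : ∀ t t', ∑ i, ∑ j, Y t i j * Y t' i j = (Y t * Y t').trace := fun t t' ↦
    (sum_hadamard_eq (Y t) (Y t')).trans <| by
      rw [← conjTranspose_eq_transpose_of_trivial, (hpsd t').1.eq]
  rw [one_sub_sum_posSemidef_iff_pairwise_mul_eq_zero hproj]
  refine forall₂_congr fun t t' ↦ imp_congr_right fun _ ↦ ?_
  rw [hinner, (hpsd t).trace_mul_eq_zero_iff (hpsd t')]

/-- Proposition 1: for rank-one, trace-one PSD matrices `Y^1, …, Y^r`,
`∑ t, Y^t ⪯ I` iff the `Y^t` are pairwise orthogonal in the trace inner product. -/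
theorem stmt0 (p r : ℕ) (hp : 1 ≤ p) (hr : 1 ≤ r)
    (Y : Fin r → Matrix (Fin p) (Fin p) ℝ)
    (hpsd : ∀ t, (Y t).PosSemidef)
    (htr : ∀ t, (Y t).trace = 1)
    (hrank : ∀ t, (Y t).rank = 1) :
    (1 - ∑ t, Y t).PosSemidef ↔
      ∀ t t', t ≠ t' → ∑ i, ∑ j, Y t i j * Y t' i j = 0 :=
  stmt0_general p r Y hpsd htr hrank
end

section
/- Let U be a real p×r matrix with Uᵀ U = I_r (orthonormal columns) and let Z ∈ {0,1}^{p×r} be such that U_{i,t} = 0 whenever Z_{i,t} = 0. Define w ∈ ℝ^p by w_i = min(1, ∑_{t=1}^r Z_{i,t}). Then U Uᵀ ⪯ Diag(w), where Diag(w) is the diagonal matrix with diagonal entries w_1, …, w_p. -/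
open Matrix

/-- First direction of the proof of Theorem 1: if `U` has orthonormal columns and is
supported on `Z`, then `U Uᵀ ⪯ Diag(w)` where `w_i = min(1, ∑_t Z_{i,t})`. -/
theorem stmt4 (p r : ℕ) (U Z : Matrix (Fin p) (Fin r) ℝ)
    (hU : Uᵀ * U = 1)
    (hZ : ∀ i t, Z i t = 0 ∨ Z i t = 1)
    (hsupp : ∀ i t, Z i t = 0 → U i t = 0) :
    (Matrix.diagonal (fun i => min 1 (∑ t, Z i t)) - U * Uᵀ).PosSemidef := by
  set w : Fin p → ℝ := fun i => min 1 (∑ t, Z i t) with hw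
  set D := Matrix.diagonal w with hD
  have hZnn : ∀ i t, (0:ℝ) ≤ Z i t := fun i t => by rcases hZ i t with h | h <;> simp [h]
  have hw01 : ∀ i, w i = 0 ∨ w i = 1 := by
    intro i
    by_cases h : ∀ t, Z i t = 0
    · left; simp [hw, Finset.sum_eq_zero (fun t _ => h t)]
    · right
      push_neg at h
      obtain ⟨t, ht⟩ := h
      have ht1 : Z i t = 1 := (hZ i t).resolve_left ht
      have h1 : (1:ℝ) ≤ ∑ s, Z i s := by
        calc (1:ℝ) = Z i t := ht1.symm
        _ ≤ ∑ s, Z i s := Finset.single_le_sum (fun s _ => hZnn i s) (Finset.mem_univ t)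
      simpa [hw] using min_eq_left h1
  have hDU : D * U = U := by
    ext i t
    rw [hD, Matrix.diagonal_mul]
    rcases hw01 i with h | h
    · -- w i = 0, so sum of Z row is 0, so each Z i s = 0, so U i t = 0
      have h0 : min (1:ℝ) (∑ s, Z i s) = 0 := h
      have hs : ∑ s, Z i s = 0 := by
        rcases le_or_gt (∑ s, Z i s) 1 with h' | h'
        · rwa [min_eq_right h'] at h0
        · rw [min_eq_left h'.le] at h0; norm_num at h0
      have hall : ∀ s ∈ Finset.univ, Z i s = 0 :=
        (Finset.sum_eq_zero_iff_of_nonneg (fun s _ => hZnn i s)).mp hs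
      rw [h, hsupp i t (hall t (Finset.mem_univ t))]
      ring
    · rw [h]; ring
  have hDD : D * D = D := by
    rw [hD, Matrix.diagonal_mul_diagonal]
    have : (fun i => w i * w i) = w := by
      funext i; rcases hw01 i with h | h <;> rw [h] <;> ring
    rw [this]
  have hUtD : Uᵀ * D = Uᵀ := by
    have : Dᵀ = D := Matrix.diagonal_transpose w
    calc Uᵀ * D = Uᵀ * Dᵀ := by rw [this]
    _ = (D * U)ᵀ := by rw [Matrix.transpose_mul]
    _ = Uᵀ := by rw [hDU]
  set A : Matrix (Fin p) (Fin p) ℝ := 1 - U * Uᵀ with hA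
  have hAsymm : Aᵀ = A := by
    simp [hA, Matrix.transpose_sub, Matrix.transpose_mul]
  have hAA : A * A = A := by
    have : U * Uᵀ * (U * Uᵀ) = U * Uᵀ := by
      calc U * Uᵀ * (U * Uᵀ) = U * (Uᵀ * U) * Uᵀ := by simp [Matrix.mul_assoc]
      _ = U * Uᵀ := by rw [hU]; simp
    rw [hA, Matrix.sub_mul, Matrix.mul_sub, Matrix.mul_sub, Matrix.one_mul,
      Matrix.mul_one, Matrix.one_mul, this]
    abel
  have hApsd : A.PosSemidef := by
    have := Matrix.posSemidef_self_mul_conjTranspose A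
    rwa [Matrix.conjTranspose_eq_transpose_of_trivial, hAsymm, hAA] at this
  have key : D - U * Uᵀ = D * A * Dᴴ := by
    rw [Matrix.conjTranspose_eq_transpose_of_trivial, Matrix.diagonal_transpose]
    calc D - U * Uᵀ = D * D - U * Uᵀ := by rw [hDD]
    _ = D * D - D * (U * Uᵀ) * D := by rw [← Matrix.mul_assoc, hDU, Matrix.mul_assoc, hUtD]
    _ = D * (1 - U * Uᵀ) * D := by noncomm_ring
  rw [show (Matrix.diagonal w - U * Uᵀ) = D * A * Dᴴ from key]
  exact hApsd.mul_mul_conjTranspose_same D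
end

section
/- Let p, r, k be positive integers with r ≤ p and r ≤ k, and let Σ be a real symmetric p×p matrix. Define V₁ as the supremum of ⟨U Uᵀ, Σ⟩ over all pairs (U, Z) where U is a real p×r matrix, Z ∈ {0,1}^{p×r}, ∑_{i=1}^p ∑_{t=1}^r Z_{i,t} ≤ k, Uᵀ U = I_r, and U_{i,t} = 0 whenever Z_{i,t} = 0. Define V₂ as the supremum of ⟨Y, Σ⟩ over all tuples (Y, (Y^t)_{t=1}^r, Z) where Z ∈ {0,1}^{p×r} with ∑_{i,t} Z_{i,t} ≤ k, each Y^t is a real symmetric p×p positive semidefinite matrix with trace(Y^t) = 1 and rank(Y^t) = 1 and Y^t_{i,j} = 0 for all j whenever Z_{i,t} = 0, Y = ∑_{t=1}^r Y^t, and Y ⪯ Diag(w) where w_i = min(1, ∑_{t=1}^r Z_{i,t}). Then V₁ = V₂. -/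
/-!
Both suprema are taken over the same set of values. Given orthonormal `U`, take `Yᵗ = uₜuₜᵀ` for
the columns `uₜ`, so `Y = UUᵀ`; then `Diag(w) - UUᵀ` is a Hermitian idempotent (`Diag(w)` is a
projection fixing `U`), hence positive semidefinite. Conversely a positive semidefinite rank-one
matrix of trace one is `uuᵀ` with `‖u‖ = 1`, and `∑ₜ uₜuₜᵀ ⪯ Diag(w) ⪯ I` evaluated at `uₛ` gives
`∑ₜ ⟨uₜ, uₛ⟩² ≤ 1`, which forces the `uₜ` to be orthonormal.
-/

open Matrix

namespace Matrix

variable {n r : Type*}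

theorem rank_vecMulVec_self [Fintype n] [DecidableEq n] {K : Type*} [Field K] {u : n → K}
    (hu : u ≠ 0) : (vecMulVec u u).rank = 1 := by
  refine le_antisymm (rank_vecMulVec_le u u) (Nat.one_le_iff_ne_zero.mpr fun h => ?_)
  rw [rank, Submodule.finrank_eq_zero, LinearMap.range_eq_bot, ← toLin'_apply',
    LinearEquiv.map_eq_zero_iff, vecMulVec_eq_zero] at h
  tauto

theorem exists_eq_vecMulVec_of_rank_eq_one [Fintype n] [Fintype r] {K : Type*} [Field K]
    {A : Matrix n r K} (hA : A.rank = 1) : ∃ v w, A = vecMulVec v w := by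
  rw [rank_eq_finrank_span_cols, finrank_eq_one_iff'] at hA
  obtain ⟨v, -, hv⟩ := hA
  choose c hc using fun j => hv ⟨A.col j, Submodule.subset_span ⟨j, rfl⟩⟩
  refine ⟨v, c, ext fun i j => ?_⟩
  rw [vecMulVec_apply, mul_comm, ← col_apply A j i]
  exact congrFun (congrArg Subtype.val (hc j)).symm i

theorem PosSemidef.exists_eq_vecMulVec_self_of_rank_eq_one [Fintype n] {A : Matrix n n ℝ}
    (hA : A.PosSemidef) (hrank : A.rank = 1) : ∃ u, A = vecMulVec u u := by
  obtain ⟨v, w, rfl⟩ := exists_eq_vecMulVec_of_rank_eq_one hrank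
  have htrace : v ⬝ᵥ w ≠ 0 := by
    rw [← trace_vecMulVec, Ne, hA.trace_eq_zero_iff]
    rintro h
    simp [h, rank_zero] at hrank
  obtain ⟨i₀, -, hi₀⟩ := Finset.exists_ne_zero_of_sum_ne_zero htrace
  have hpos : 0 < v i₀ * w i₀ := hA.diag_nonneg.lt_of_ne' hi₀
  have hv : v i₀ ≠ 0 := left_ne_zero_of_mul hi₀
  have hw : ∀ j, w j = w i₀ / v i₀ * v j := fun j => by
    have := hA.isHermitian.apply j i₀
    simp only [vecMulVec_apply, star_trivial] at this
    field_simp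
    linarith
  have hc : 0 ≤ w i₀ / v i₀ := by
    rw [← mul_div_mul_left (w i₀) (v i₀) hv]
    exact div_nonneg hpos.le (mul_self_nonneg _)
  refine ⟨Real.sqrt (w i₀ / v i₀) • v, ext fun i j => ?_⟩
  simp only [vecMulVec_apply, Pi.smul_apply, smul_eq_mul, hw j]
  rw [mul_mul_mul_comm, Real.mul_self_sqrt hc]
  ring

theorem mul_transpose_eq_sum_vecMulVec [Fintype r] {R : Type*} [CommSemiring R]
    (U : Matrix n r R) : U * Uᵀ = ∑ t, vecMulVec (Uᵀ t) (Uᵀ t) := by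
  ext i j
  simp [mul_apply, Matrix.sum_apply, vecMulVec_apply]

theorem transpose_mul_self_apply [Fintype n] {R : Type*} [Mul R] [AddCommMonoid R]
    (U : Matrix n r R) (s t : r) : (Uᵀ * U) s t = Uᵀ s ⬝ᵥ Uᵀ t :=
  rfl

theorem PosSemidef.of_isHermitian_of_mul_self [Fintype n] {R : Type*} [CommRing R]
    [PartialOrder R] [StarRing R] [StarOrderedRing R] {A : Matrix n n R} (hA : A.IsHermitian)
    (hAA : A * A = A) : A.PosSemidef := by
  simpa [hA.eq, hAA] using posSemidef_conjTranspose_mul_self A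

/-- `D - U Uᴴ` is itself a Hermitian idempotent. -/
theorem posSemidef_sub_mul_conjTranspose [Fintype n] [Fintype r] [DecidableEq r] {R : Type*}
    [CommRing R] [PartialOrder R] [StarRing R] [StarOrderedRing R]
    {D : Matrix n n R} {U : Matrix n r R}
    (hD : D.IsHermitian) (hDD : D * D = D) (hU : Uᴴ * U = 1) (hDU : D * U = U) :
    (D - U * Uᴴ).PosSemidef := by
  have hUD : Uᴴ * D = Uᴴ := by rw [← hD.eq, ← conjTranspose_mul, hDU]
  have hPP : U * Uᴴ * (U * Uᴴ) = U * Uᴴ := by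
    rw [Matrix.mul_assoc, ← Matrix.mul_assoc Uᴴ, hU, Matrix.one_mul]
  refine .of_isHermitian_of_mul_self (hD.sub (isHermitian_mul_conjTranspose_self U)) ?_
  rw [sub_mul, mul_sub, mul_sub, hDD, ← Matrix.mul_assoc, hDU, Matrix.mul_assoc, hUD, hPP]
  abel

/-- Testing the form on the unit column `s` gives `∑ₜ ⟨uₜ, uₛ⟩² ≤ 1 = ⟨uₛ, uₛ⟩²`, so every other
column is orthogonal to `uₛ`. -/
theorem transpose_mul_self_eq_one_of_posSemidef_diagonal_sub [Fintype n] [Fintype r]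
    [DecidableEq n] [DecidableEq r] {d : n → ℝ} (hd : ∀ i, d i ≤ 1) {U : Matrix n r ℝ}
    (hU : ∀ t, (Uᵀ * U) t t = 1) (h : (diagonal d - U * Uᵀ).PosSemidef) : Uᵀ * U = 1 := by
  ext t s
  set x := Uᵀ s
  have hsq : ∑ t, (Uᵀ * U) t s ^ 2 ≤ 1 := by
    have hq := h.dotProduct_mulVec_nonneg x
    rw [star_trivial, sub_mulVec, dotProduct_sub, sub_nonneg] at hq
    calc ∑ t, (Uᵀ * U) t s ^ 2 = (Uᵀ *ᵥ x) ⬝ᵥ (Uᵀ *ᵥ x) := by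
          simp only [dotProduct, sq]; rfl
      _ = x ⬝ᵥ ((U * Uᵀ) *ᵥ x) := by
          rw [← mulVec_mulVec, dotProduct_mulVec, vecMul_transpose, dotProduct_comm]
      _ ≤ x ⬝ᵥ (diagonal d *ᵥ x) := hq
      _ ≤ x ⬝ᵥ x := by
          simp only [dotProduct, mulVec_diagonal]
          exact Finset.sum_le_sum fun i _ => by nlinarith [hd i, mul_self_nonneg (x i)]
      _ = 1 := hU s
  rw [← Finset.add_sum_erase _ _ (Finset.mem_univ s), hU s, one_pow,
    add_le_iff_nonpos_right] at hsq
  rcases eq_or_ne t s with rfl | hts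
  · rw [hU, one_apply_eq]
  · rw [one_apply_ne hts, ← sq_eq_zero_iff]
    exact (Finset.sum_eq_zero_iff_of_nonneg (fun _ _ => sq_nonneg _)).mp
      (hsq.antisymm (Finset.sum_nonneg fun _ _ => sq_nonneg _)) t
      (Finset.mem_erase.mpr ⟨hts, Finset.mem_univ t⟩)

end Matrix

/-- The weight `wᵢ = min(1, ∑ₜ Zᵢₜ)`; for a `0/1` matrix it indicates the nonzero rows. -/
def rowIndicator {m r : Type*} [Fintype r] (Z : Matrix m r ℝ) (i : m) : ℝ := min 1 (∑ t, Z i t)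

section rowIndicator

variable {m r : Type*} [Fintype r] {Z : Matrix m r ℝ}

theorem rowIndicator_eq_zero_or_eq_one (hZ : ∀ i t, Z i t = 0 ∨ Z i t = 1) (i : m) :
    (rowIndicator Z i = 0 ∧ ∀ t, Z i t = 0) ∨ rowIndicator Z i = 1 := by
  by_cases h : ∀ t, Z i t = 0
  · simp [rowIndicator, h]
  · obtain ⟨t₀, ht₀⟩ := not_forall.mp h
    have hle : Z i t₀ ≤ ∑ t, Z i t := Finset.single_le_sum
      (fun t _ => by rcases hZ i t with h | h <;> simp [h]) (Finset.mem_univ t₀)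
    exact .inr (min_eq_left (((hZ i t₀).resolve_left ht₀).symm.le.trans hle))

variable [Fintype m] [DecidableEq m]

theorem diagonal_rowIndicator_mul_self (hZ : ∀ i t, Z i t = 0 ∨ Z i t = 1) :
    diagonal (rowIndicator Z) * diagonal (rowIndicator Z) = diagonal (rowIndicator Z) := by
  rw [diagonal_mul_diagonal]
  congr 1
  ext i
  rcases rowIndicator_eq_zero_or_eq_one hZ i with ⟨h, -⟩ | h <;> simp [h]

theorem diagonal_rowIndicator_mul_of_support {U : Matrix m r ℝ}
    (hZ : ∀ i t, Z i t = 0 ∨ Z i t = 1) (hUZ : ∀ i t, Z i t = 0 → U i t = 0) :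
    diagonal (rowIndicator Z) * U = U := by
  ext i t
  rw [diagonal_mul]
  rcases rowIndicator_eq_zero_or_eq_one hZ i with ⟨-, h⟩ | h
  · simp [hUZ i t (h t)]
  · rw [h, one_mul]

end rowIndicator

theorem stmt5_general (p r k : ℕ)
    (Sig : Matrix (Fin p) (Fin p) ℝ) :
    sSup {v : ℝ | ∃ (U : Matrix (Fin p) (Fin r) ℝ) (Z : Matrix (Fin p) (Fin r) ℝ),
        (∀ i t, Z i t = 0 ∨ Z i t = 1) ∧
        (∑ i, ∑ t, Z i t) ≤ (k : ℝ) ∧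
        Uᵀ * U = 1 ∧
        (∀ i t, Z i t = 0 → U i t = 0) ∧
        v = ∑ i, ∑ j, (U * Uᵀ) i j * Sig i j} =
    sSup {v : ℝ | ∃ (Y : Matrix (Fin p) (Fin p) ℝ)
        (Yt : Fin r → Matrix (Fin p) (Fin p) ℝ)
        (Z : Matrix (Fin p) (Fin r) ℝ),
        (∀ i t, Z i t = 0 ∨ Z i t = 1) ∧
        (∑ i, ∑ t, Z i t) ≤ (k : ℝ) ∧
        (∀ t, (Yt t).PosSemidef ∧ (Yt t).trace = 1 ∧ (Yt t).rank = 1) ∧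
        (∀ t i, Z i t = 0 → ∀ j, Yt t i j = 0) ∧
        Y = ∑ t, Yt t ∧
        (Matrix.diagonal (fun i => min 1 (∑ t, Z i t)) - Y).PosSemidef ∧
        v = ∑ i, ∑ j, Y i j * Sig i j} := by
  congr 1
  ext v
  constructor
  · rintro ⟨U, Z, hZ, hZk, hU, hUZ, rfl⟩
    have hnorm : ∀ t, Uᵀ t ⬝ᵥ Uᵀ t = 1 := fun t => by
      rw [← transpose_mul_self_apply, hU, one_apply_eq]
    refine ⟨U * Uᵀ, fun t => vecMulVec (Uᵀ t) (Uᵀ t), Z, hZ, hZk, fun t => ⟨?_, ?_, ?_⟩,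
      fun t i h j => ?_, mul_transpose_eq_sum_vecMulVec U, ?_, rfl⟩
    · simpa using posSemidef_vecMulVec_self_star (Uᵀ t)
    · rw [trace_vecMulVec, hnorm]
    · refine rank_vecMulVec_self fun h => ?_
      simpa [h] using hnorm t
    · simp [vecMulVec_apply, hUZ i t h]
    · rw [← conjTranspose_eq_transpose_of_trivial] at hU ⊢
      exact posSemidef_sub_mul_conjTranspose (isHermitian_diagonal _)
        (diagonal_rowIndicator_mul_self hZ) hU (diagonal_rowIndicator_mul_of_support hZ hUZ)
  · rintro ⟨_, Yt, Z, hZ, hZk, hYt, hYZ, rfl, hY, rfl⟩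
    choose u hu using fun t => (hYt t).1.exists_eq_vecMulVec_self_of_rank_eq_one (hYt t).2.2
    obtain rfl : Yt = fun t => vecMulVec (u t) (u t) := funext hu
    set U : Matrix (Fin p) (Fin r) ℝ := (of u)ᵀ
    have hsum : ∑ t, vecMulVec (u t) (u t) = U * Uᵀ := (mul_transpose_eq_sum_vecMulVec U).symm
    refine ⟨U, Z, hZ, hZk, ?_, fun i t h => mul_self_eq_zero.mp (hYZ t i h i), by rw [hsum]⟩
    refine transpose_mul_self_eq_one_of_posSemidef_diagonal_sub (fun i => min_le_left _ _)
      (fun t => ?_) (hsum ▸ hY)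
    rw [transpose_mul_self_apply, ← trace_vecMulVec]
    exact (hYt t).2.1

/-- Theorem 1: the sparse PCA problem with orthogonality constraints attains the same
optimal value as its sparsity- and rank-constrained reformulation. -/
theorem stmt5 (p r k : ℕ) (hp : 1 ≤ p) (hr : 1 ≤ r) (hk : 1 ≤ k)
    (hrp : r ≤ p) (hrk : r ≤ k)
    (Sig : Matrix (Fin p) (Fin p) ℝ) (hSym : Sig.IsSymm) :
    sSup {v : ℝ | ∃ (U : Matrix (Fin p) (Fin r) ℝ) (Z : Matrix (Fin p) (Fin r) ℝ),
        (∀ i t, Z i t = 0 ∨ Z i t = 1) ∧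
        (∑ i, ∑ t, Z i t) ≤ (k : ℝ) ∧
        Uᵀ * U = 1 ∧
        (∀ i t, Z i t = 0 → U i t = 0) ∧
        v = ∑ i, ∑ j, (U * Uᵀ) i j * Sig i j} =
    sSup {v : ℝ | ∃ (Y : Matrix (Fin p) (Fin p) ℝ)
        (Yt : Fin r → Matrix (Fin p) (Fin p) ℝ)
        (Z : Matrix (Fin p) (Fin r) ℝ),
        (∀ i t, Z i t = 0 ∨ Z i t = 1) ∧
        (∑ i, ∑ t, Z i t) ≤ (k : ℝ) ∧
        (∀ t, (Yt t).PosSemidef ∧ (Yt t).trace = 1 ∧ (Yt t).rank = 1) ∧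
        (∀ t i, Z i t = 0 → ∀ j, Yt t i j = 0) ∧
        Y = ∑ t, Yt t ∧
        (Matrix.diagonal (fun i => min 1 (∑ t, Z i t)) - Y).PosSemidef ∧
        v = ∑ i, ∑ j, Y i j * Sig i j} :=
  stmt5_general p r k Sig
end

section
/- Let k ≥ 1 be an integer, z ∈ {0,1}^p with ∑_{i=1}^p z_i ≤ k, and u ∈ ℝ^p with ‖u‖₂ = 1 and u_i = 0 whenever z_i = 0. Set Y = u uᵀ. Then for every index i ∈ {1,…,p}, (∑_{j=1}^p |Y_{i,j}|)² ≤ k · Y_{i,i} · z_i. -/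
open Matrix

/-- Inequality (13) of Proposition 2, for a rank-one component `Y = u uᵀ` with
support `z` and sparsity budget `k`: `(∑_j |Y_{i,j}|)² ≤ k · Y_{i,i} · z_i`. -/
theorem stmt7 (p k : ℕ) (hk : 1 ≤ k) (z : Fin p → ℝ)
    (hz : ∀ i, z i = 0 ∨ z i = 1) (hcard : ∑ i, z i ≤ (k : ℝ))
    (u : EuclideanSpace ℝ (Fin p)) (hnorm : ‖u‖ = 1)
    (hsupp : ∀ i, z i = 0 → u i = 0)
    (Y : Matrix (Fin p) (Fin p) ℝ) (hY : Y = Matrix.vecMulVec u u) (i : Fin p) :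
    (∑ j, |Y i j|) ^ 2 ≤ (k : ℝ) * Y i i * z i := by
  subst hY
  simp only [vecMulVec_apply, abs_mul]
  have husq : ∑ j, u j ^ 2 = 1 := by
    have := EuclideanSpace.norm_eq u
    rw [hnorm] at this
    have h1 : Real.sqrt (∑ j, ‖u j‖ ^ 2) = 1 := this.symm
    have := Real.sqrt_eq_one.mp h1
    simpa [Real.norm_eq_abs, sq_abs] using this
  rcases hz i with hzi | hzi
  · simp [hsupp i hzi, hzi]
  · rw [hzi, mul_one]
    rw [← Finset.mul_sum, mul_pow]
    have key : (∑ j, |u j|) ^ 2 ≤ (k : ℝ) := by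
      have heq : ∀ j, |u j| = z j * |u j| := by
        intro j
        rcases hz j with h | h
        · simp [h, hsupp j h]
        · simp [h]
      calc (∑ j, |u j|) ^ 2 = (∑ j, z j * |u j|) ^ 2 := by
            congr 1; exact Finset.sum_congr rfl fun j _ => heq j
        _ ≤ (∑ j, z j ^ 2) * ∑ j, |u j| ^ 2 :=
            Finset.sum_mul_sq_le_sq_mul_sq _ _ _
        _ = (∑ j, z j) * ∑ j, u j ^ 2 := by
            congr 1
            · exact Finset.sum_congr rfl fun j _ => by
                rcases hz j with h | h <;> simp [h]
            · exact Finset.sum_congr rfl fun j _ => by rw [sq_abs]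
        _ ≤ (k : ℝ) * 1 := by
            rw [husq]
            exact mul_le_mul_of_nonneg_right hcard zero_le_one
        _ = (k : ℝ) := mul_one _
    have h2 : |u i| ^ 2 = u i * u i := by rw [sq_abs, sq]
    calc |u i| ^ 2 * (∑ j, |u j|) ^ 2 ≤ |u i| ^ 2 * (k : ℝ) :=
          mul_le_mul_of_nonneg_left key (sq_nonneg _)
      _ = (k : ℝ) * (u i * u i) := by rw [h2, mul_comm]
end

section
/- Let k ≥ 1 be an integer, z ∈ {0,1}^p with ∑_{i=1}^p z_i ≤ k, and u ∈ ℝ^p with ‖u‖₂ = 1 and u_i = 0 whenever z_i = 0. Set Y = u uᵀ. Then for every index j ∈ {1,…,p}, ∑_{i ≠ j} (Y_{i,j})² ≤ (k − 1) · z_j · (z_j − Y_{j,j}), where the sum ranges over i ∈ {1,…,p} with i ≠ j. -/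
open Matrix

/-- Inequality (14) of Proposition 2, for a rank-one component `Y = u uᵀ` with
support `z` and sparsity budget `k`:
`∑_{i ≠ j} Y_{i,j}² ≤ (k − 1) · z_j · (z_j − Y_{j,j})`. -/
theorem stmt8 (p k : ℕ) (hk : 1 ≤ k) (z : Fin p → ℝ)
    (hz : ∀ i, z i = 0 ∨ z i = 1) (hcard : ∑ i, z i ≤ (k : ℝ))
    (u : EuclideanSpace ℝ (Fin p)) (hnorm : ‖u‖ = 1)
    (hsupp : ∀ i, z i = 0 → u i = 0)
    (Y : Matrix (Fin p) (Fin p) ℝ) (hY : Y = Matrix.vecMulVec u u) (j : Fin p) :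
    ∑ i ∈ Finset.univ.filter (fun i => i ≠ j), (Y i j) ^ 2 ≤
      ((k : ℝ) - 1) * z j * (z j - Y j j) := by
  subst hY
  have hsum : ∑ i, (u i) ^ 2 = 1 := by
    have h := EuclideanSpace.norm_eq u
    rw [hnorm] at h
    have h2 : Real.sqrt (∑ i, ‖u i‖ ^ 2) = 1 := h.symm
    have h3 := Real.sqrt_eq_one.mp h2
    simpa [Real.norm_eq_abs, sq_abs] using h3
  set S := ∑ i ∈ Finset.univ.filter (fun i => i ≠ j), (u i) ^ 2 with hS
  have hSnn : 0 ≤ S := Finset.sum_nonneg fun i _ => sq_nonneg _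
  have hLHS : ∑ i ∈ Finset.univ.filter (fun i => i ≠ j), (Matrix.vecMulVec u u i j) ^ 2
      = (u j) ^ 2 * S := by
    rw [hS, Finset.mul_sum]
    refine Finset.sum_congr rfl fun i _ => ?_
    simp only [Matrix.vecMulVec_apply]
    ring
  have hsplit : S + (u j) ^ 2 = 1 := by
    rw [hS, ← hsum,
      ← Finset.sum_filter_add_sum_filter_not Finset.univ (fun i => i ≠ j) (fun i => (u i) ^ 2)]
    congr 1
    simp [Finset.filter_eq']
  have hYjj : Matrix.vecMulVec u u j j = u j * u j := rfl
  have hk1 : (1 : ℝ) ≤ (k : ℝ) := by exact_mod_cast hk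
  rcases hz j with hj | hj
  · have huj : u j = 0 := hsupp j hj
    rw [hLHS, huj, hj]
    simp
  · rw [hLHS, hj, hYjj]
    have h1 : 1 - u j * u j = S := by nlinarith [hsplit]
    rw [mul_one, h1]
    rcases eq_or_lt_of_le hSnn with h0 | hpos
    · nlinarith
    · have hSne : S ≠ 0 := ne_of_gt hpos
      obtain ⟨i, hi, hne⟩ := Finset.exists_ne_zero_of_sum_ne_zero (hS ▸ hSne)
      have hij : i ≠ j := (Finset.mem_filter.mp hi).2
      have hui : u i ≠ 0 := fun h => hne (by rw [h]; ring)
      have hzi : z i = 1 := by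
        rcases hz i with h | h
        · exact absurd (hsupp i h) hui
        · exact h
      have hsub : ({i, j} : Finset (Fin p)) ⊆ Finset.univ := Finset.subset_univ _
      have h2 : ∑ l ∈ ({i, j} : Finset (Fin p)), z l ≤ ∑ l, z l :=
        Finset.sum_le_sum_of_subset_of_nonneg hsub
          (fun l _ _ => by rcases hz l with h | h <;> rw [h] <;> norm_num)
      rw [Finset.sum_pair hij, hzi, hj] at h2
      norm_num at h2
      have hk2 : (2 : ℝ) ≤ (k : ℝ) := le_trans h2 hcard
      have huj1 : (u j) ^ 2 ≤ 1 := by nlinarith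
      nlinarith
end

section
/- Let U be a real p×r matrix with Uᵀ U = I_r and let Z ∈ {0,1}^{p×r} be such that U_{i,t} = 0 whenever Z_{i,t} = 0. Set Y = U Uᵀ and w_i = min(1, ∑_{t=1}^r Z_{i,t}) for each i. Then for every index i ∈ {1,…,p}, ∑_{j=1}^p (Y_{i,j})² ≤ r · Y_{i,i} · w_i. -/
open Matrix

/-- One of the strengthened valid inequalities of Theorem 2:
for feasible `(U, Z)` and `Y = U Uᵀ`, `∑_j Y_{i,j}² ≤ r · Y_{i,i} · w_i`. -/
theorem stmt9 (p r : ℕ) (U Z : Matrix (Fin p) (Fin r) ℝ)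
    (hU : Uᵀ * U = 1)
    (hZ : ∀ i t, Z i t = 0 ∨ Z i t = 1)
    (hsupp : ∀ i t, Z i t = 0 → U i t = 0)
    (Y : Matrix (Fin p) (Fin p) ℝ) (hY : Y = U * Uᵀ)
    (w : Fin p → ℝ) (hw : ∀ i, w i = min 1 (∑ t, Z i t)) (i : Fin p) :
    ∑ j, (Y i j) ^ 2 ≤ (r : ℝ) * Y i i * w i := by
  have hYsymm : ∀ a b, Y a b = Y b a := by
    intro a b
    simp [hY, Matrix.mul_apply, Matrix.transpose_apply, mul_comm]
  have hYY : Y * Y = Y := by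
    rw [hY]
    calc U * Uᵀ * (U * Uᵀ) = U * (Uᵀ * U) * Uᵀ := by
          simp [Matrix.mul_assoc]
      _ = U * Uᵀ := by rw [hU]; simp
  have hLHS : ∑ j, (Y i j) ^ 2 = Y i i := by
    have := congrArg (fun M => M i i) hYY
    simpa [Matrix.mul_apply, sq, hYsymm i] using this
  have hYii : Y i i = ∑ t, U i t ^ 2 := by
    simp [hY, Matrix.mul_apply, Matrix.transpose_apply, sq]
  have hYnn : 0 ≤ Y i i := by
    rw [hYii]; positivity
  rw [hLHS]
  by_cases hall : ∀ t, Z i t = 0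
  · have h0 : Y i i = 0 := by
      rw [hYii]
      apply Finset.sum_eq_zero
      intro t _
      rw [hsupp i t (hall t)]; ring
    simp [h0]
  · push_neg at hall
    obtain ⟨t, ht⟩ := hall
    have hZt : Z i t = 1 := (hZ i t).resolve_left ht
    have hsum : (1 : ℝ) ≤ ∑ t, Z i t := by
      calc (1 : ℝ) = Z i t := hZt.symm
        _ ≤ ∑ t, Z i t := by
            apply Finset.single_le_sum (f := fun t => Z i t)
              (fun s _ => ?_) (Finset.mem_univ t)
            rcases hZ i s with h | h <;> simp [h]
    have hwi : w i = 1 := by rw [hw]; exact min_eq_left hsum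
    have hr : (1 : ℝ) ≤ r := by
      have : 0 < r := Fin.pos_iff_nonempty.mpr ⟨t⟩
      exact_mod_cast this
    rw [hwi, mul_one]
    nlinarith
end

section
/- Let k ≥ 1 be an integer, U a real p×r matrix with Uᵀ U = I_r, and Z ∈ {0,1}^{p×r} with ∑_{i=1}^p ∑_{t=1}^r Z_{i,t} ≤ k and U_{i,t} = 0 whenever Z_{i,t} = 0. Set Y = U Uᵀ and w_i = min(1, ∑_{t=1}^r Z_{i,t}) for each i. Then for every index i ∈ {1,…,p}, (∑_{j=1}^p |Y_{i,j}|)² ≤ k · Y_{i,i} · w_i. -/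
open Matrix

/-- Strengthened ℓ1-based valid inequality of Theorem 2: for feasible `(U, Z)`
with overall sparsity budget `k` and `Y = U Uᵀ`,
`(∑_j |Y_{i,j}|)² ≤ k · Y_{i,i} · w_i`. -/
theorem stmt10 (p r k : ℕ) (hk : 1 ≤ k) (U Z : Matrix (Fin p) (Fin r) ℝ)
    (hU : Uᵀ * U = 1)
    (hZ : ∀ i t, Z i t = 0 ∨ Z i t = 1)
    (hcard : ∑ i, ∑ t, Z i t ≤ (k : ℝ))
    (hsupp : ∀ i t, Z i t = 0 → U i t = 0)
    (Y : Matrix (Fin p) (Fin p) ℝ) (hY : Y = U * Uᵀ)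
    (w : Fin p → ℝ) (hw : ∀ i, w i = min 1 (∑ t, Z i t)) (i : Fin p) :
    (∑ j, |Y i j|) ^ 2 ≤ (k : ℝ) * Y i i * w i := by
  have hZnn : ∀ a t, (0:ℝ) ≤ Z a t := by
    intro a t; rcases hZ a t with h | h <;> simp [h]
  have hYij : ∀ a b, Y a b = ∑ t, U a t * U b t := by
    intro a b; rw [hY]; simp [Matrix.mul_apply, Matrix.transpose_apply]
  -- rows with zero Z-sum have zero U-row
  have hrow0 : ∀ a, (∑ t, Z a t) = 0 → ∀ t, U a t = 0 := by
    intro a ha t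
    apply hsupp
    exact (Finset.sum_eq_zero_iff_of_nonneg (fun t _ => hZnn a t)).1 ha t (Finset.mem_univ t)
  -- sums of Z over a row are ≥ 1 when nonzero
  have hrow1 : ∀ a, (∑ t, Z a t) ≠ 0 → (1:ℝ) ≤ ∑ t, Z a t := by
    intro a ha
    obtain ⟨t, _, ht⟩ := Finset.exists_ne_zero_of_sum_ne_zero ha
    have h1 : Z a t = 1 := (hZ a t).resolve_left ht
    calc (1:ℝ) = Z a t := h1.symm
      _ ≤ ∑ t, Z a t := Finset.single_le_sum (fun t _ => hZnn a t) (Finset.mem_univ t)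
  by_cases hi : (∑ t, Z i t) = 0
  · have hU0 : ∀ t, U i t = 0 := hrow0 i hi
    have hY0 : ∀ j, Y i j = 0 := by
      intro j; rw [hYij]; exact Finset.sum_eq_zero fun t _ => by simp [hU0 t]
    simp [hw, hi, hY0, Finset.sum_const_zero]
  · -- w i = 1
    have hwi : w i = 1 := by
      rw [hw]; exact min_eq_left (hrow1 i hi)
    -- Y is idempotent and symmetric
    have hYY : Y * Y = Y := by
      rw [hY, Matrix.mul_assoc, ← Matrix.mul_assoc Uᵀ U Uᵀ, hU, Matrix.one_mul]
    have hsymm : ∀ a b, Y a b = Y b a := by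
      intro a b; rw [hYij, hYij]
      exact Finset.sum_congr rfl fun t _ => mul_comm _ _
    have hdiag : ∑ j, (Y i j) ^ 2 = Y i i := by
      have h := congrFun (congrFun hYY i) i
      rw [Matrix.mul_apply] at h
      rw [← h]
      exact Finset.sum_congr rfl fun j _ => by rw [sq, hsymm i j]
    set S : Finset (Fin p) := Finset.univ.filter (fun j => (∑ t, Z j t) ≠ 0) with hS
    have hYoff : ∀ j ∉ S, Y i j = 0 := by
      intro j hj
      simp only [hS, Finset.mem_filter, Finset.mem_univ, true_and, not_not] at hj
      rw [hYij]
      exact Finset.sum_eq_zero fun t _ => by simp [hrow0 j hj t]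
    have hsumS : ∑ j, |Y i j| = ∑ j ∈ S, |Y i j| := by
      symm
      apply Finset.sum_subset (Finset.subset_univ S)
      intro j _ hj; simp [hYoff j hj]
    -- card bound
    have hcardS : (S.card : ℝ) ≤ (k : ℝ) := by
      have h1 : (S.card : ℝ) = ∑ j ∈ S, (1:ℝ) := by simp
      have h2 : ∑ j ∈ S, (1:ℝ) ≤ ∑ j ∈ S, ∑ t, Z j t := by
        apply Finset.sum_le_sum
        intro j hj
        simp only [hS, Finset.mem_filter, Finset.mem_univ, true_and] at hj
        exact hrow1 j hj
      have h3 : ∑ j ∈ S, ∑ t, Z j t ≤ ∑ j, ∑ t, Z j t := by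
        apply Finset.sum_le_sum_of_subset_of_nonneg (Finset.subset_univ S)
        intro j _ _
        exact Finset.sum_nonneg fun t _ => hZnn j t
      linarith
    -- Cauchy-Schwarz
    have hCS : (∑ j ∈ S, |Y i j|) ^ 2 ≤ (S.card : ℝ) * ∑ j ∈ S, (Y i j) ^ 2 := by
      have := Finset.sum_mul_sq_le_sq_mul_sq S (fun _ => (1:ℝ)) (fun j => |Y i j|)
      simp only [one_mul, one_pow, sq_abs] at this
      simpa using this
    have hsub : ∑ j ∈ S, (Y i j) ^ 2 ≤ Y i i := by
      rw [← hdiag]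
      apply Finset.sum_le_sum_of_subset_of_nonneg (Finset.subset_univ S)
      intro j _ _; exact sq_nonneg _
    have hYii : 0 ≤ Y i i := by
      rw [← hdiag]; exact Finset.sum_nonneg fun j _ => sq_nonneg _
    rw [hwi, mul_one, hsumS]
    calc (∑ j ∈ S, |Y i j|) ^ 2 ≤ (S.card : ℝ) * ∑ j ∈ S, (Y i j) ^ 2 := hCS
      _ ≤ (k : ℝ) * Y i i := by
          apply mul_le_mul hcardS hsub (Finset.sum_nonneg fun j _ => sq_nonneg _)
          positivity
end

section
/- Let k and r be positive integers with r ≤ k, U a real p×r matrix with Uᵀ U = I_r, and Z ∈ {0,1}^{p×r} with ∑_{i=1}^p ∑_{t=1}^r Z_{i,t} ≤ k and U_{i,t} = 0 whenever Z_{i,t} = 0. Set Y = U Uᵀ and w_i = min(1, ∑_{t=1}^r Z_{i,t}) for each i. Then for every index j ∈ {1,…,p}, ∑_{i ≠ j} (Y_{i,j})² ≤ (k − r + 1) · w_j · (w_j − Y_{j,j}), where the sum ranges over i ∈ {1,…,p} with i ≠ j. -/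
open Matrix

/-- Strengthened valid inequality of Theorem 2, from aggregating the 2×2 minors of
`Diag(w) − Y`: `∑_{i ≠ j} Y_{i,j}² ≤ (k − r + 1) · w_j · (w_j − Y_{j,j})`. -/
theorem stmt11 (p r k : ℕ) (hr : 1 ≤ r) (hk : 1 ≤ k) (hrk : r ≤ k)
    (U Z : Matrix (Fin p) (Fin r) ℝ)
    (hU : Uᵀ * U = 1)
    (hZ : ∀ i t, Z i t = 0 ∨ Z i t = 1)
    (hcard : ∑ i, ∑ t, Z i t ≤ (k : ℝ))
    (hsupp : ∀ i t, Z i t = 0 → U i t = 0)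
    (Y : Matrix (Fin p) (Fin p) ℝ) (hY : Y = U * Uᵀ)
    (w : Fin p → ℝ) (hw : ∀ i, w i = min 1 (∑ t, Z i t)) (j : Fin p) :
    ∑ i ∈ Finset.univ.filter (fun i => i ≠ j), (Y i j) ^ 2 ≤
      ((k : ℝ) - (r : ℝ) + 1) * w j * (w j - Y j j) := by
  have hsym : ∀ i, Y i j = Y j i := by
    intro i
    subst hY
    simp [Matrix.mul_apply, Matrix.transpose_apply, mul_comm]
  have hYY : Y * Y = Y := by
    subst hY
    rw [Matrix.mul_assoc, ← Matrix.mul_assoc Uᵀ, hU, Matrix.one_mul]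
  have key : ∑ i, Y i j ^ 2 = Y j j := by
    have h := congrFun (congrFun hYY j) j
    rw [Matrix.mul_apply] at h
    calc ∑ i, Y i j ^ 2 = ∑ i, Y j i * Y i j := by
          refine Finset.sum_congr rfl fun i _ => ?_
          rw [sq, hsym i]
      _ = Y j j := h
  have hsplit : Y j j ^ 2 + ∑ i ∈ Finset.univ.filter (fun i => i ≠ j), (Y i j) ^ 2
      = Y j j := by
    have h2 := Finset.sum_filter_add_sum_filter_not Finset.univ (fun i => i = j)
      (fun i => Y i j ^ 2)
    have h1 : ∑ i ∈ Finset.univ.filter (fun i => i = j), Y i j ^ 2 = Y j j ^ 2 := by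
      rw [Finset.filter_eq']
      simp
    rw [h1] at h2
    simp only [ne_eq]
    linarith [h2, key]
  have hLHS : ∑ i ∈ Finset.univ.filter (fun i => i ≠ j), (Y i j) ^ 2
      = Y j j - Y j j ^ 2 := by linarith
  have hLHSnn : (0:ℝ) ≤ ∑ i ∈ Finset.univ.filter (fun i => i ≠ j), (Y i j) ^ 2 :=
    Finset.sum_nonneg fun i _ => sq_nonneg _
  have hYjjnn : 0 ≤ Y j j := by
    subst hY
    rw [Matrix.mul_apply]
    exact Finset.sum_nonneg fun t _ => by
      simp [Matrix.transpose_apply]; exact mul_self_nonneg _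
  have hYjj1 : Y j j ≤ 1 := by nlinarith
  have hkr : (1:ℝ) ≤ (k:ℝ) - (r:ℝ) + 1 := by
    have : (r:ℝ) ≤ (k:ℝ) := by exact_mod_cast hrk
    linarith
  by_cases hz : ∀ t, Z j t = 0
  · -- w j = 0 and everything vanishes
    have hwj : w j = 0 := by
      rw [hw j]
      simp [Finset.sum_congr rfl fun t _ => hz t]
    have hUj : ∀ t, U j t = 0 := fun t => hsupp j t (hz t)
    have hYij : ∀ i, Y i j = 0 := by
      intro i
      subst hY
      rw [Matrix.mul_apply]
      exact Finset.sum_eq_zero fun t _ => by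
        simp [Matrix.transpose_apply, hUj t]
    rw [hwj]
    simp [hYij]
  · -- w j = 1
    push_neg at hz
    obtain ⟨t0, ht0⟩ := hz
    have ht1 : Z j t0 = 1 := (hZ j t0).resolve_left ht0
    have hsum1 : (1:ℝ) ≤ ∑ t, Z j t := by
      have := Finset.single_le_sum (f := fun t => Z j t)
        (fun t _ => by rcases hZ j t with h | h <;> simp [h]) (Finset.mem_univ t0)
      simpa [ht1] using this
    have hwj : w j = 1 := by rw [hw j]; exact min_eq_left hsum1
    rw [hwj, hLHS]
    nlinarith
end

section
/- Let z ∈ {0,1}^p and let u ∈ ℝ^p with ‖u‖₂ = 1 and u_i = 0 whenever z_i = 0. Set Y = u uᵀ. Then for every index i ∈ {1,…,p}, ∑_{j=1}^p (Y_{i,j})² ≤ Y_{i,i} · z_i. -/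
open Matrix

/-- The per-component perspective valid inequality from Theorem 2, for a single
rank-one component `Y = u uᵀ` with support `z`: `∑_j Y_{i,j}² ≤ Y_{i,i} · z_i`. -/
theorem stmt13 (p : ℕ) (z : Fin p → ℝ) (hz : ∀ i, z i = 0 ∨ z i = 1)
    (u : EuclideanSpace ℝ (Fin p)) (hnorm : ‖u‖ = 1)
    (hsupp : ∀ i, z i = 0 → u i = 0)
    (Y : Matrix (Fin p) (Fin p) ℝ) (hY : Y = Matrix.vecMulVec u u) (i : Fin p) :
    ∑ j, (Y i j) ^ 2 ≤ Y i i * z i := by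
  have hsum : ∑ j, (u j) ^ 2 = 1 := by
    have h := EuclideanSpace.norm_eq u
    rw [hnorm] at h
    have h2 : (1:ℝ) = Real.sqrt (∑ j, ‖u j‖ ^ 2) := h
    have h3 : ∑ j, ‖u j‖ ^ 2 = (1:ℝ) := by
      nlinarith [Real.sq_sqrt (Finset.sum_nonneg (fun j _ => sq_nonneg ‖u j‖) :
        (0:ℝ) ≤ ∑ j, ‖u j‖ ^ 2)]
    simpa [Real.norm_eq_abs, sq_abs] using h3
  subst hY
  simp only [vecMulVec_apply]
  have : ∑ j, (u i * u j) ^ 2 = (u i) ^ 2 := by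
    simp_rw [mul_pow, ← Finset.mul_sum, hsum, mul_one]
  rw [this]
  rcases hz i with h0 | h1
  · simp [hsupp i h0, h0]
  · rw [h1]; ring_nf; nlinarith [sq_nonneg (u i)]
end

section
/- Let n ≥ 1 and let 𝒴_n denote the set of real symmetric n×n matrices Y with Y² = Y (orthogonal projection matrices). Then the convex hull of 𝒴_n equals the set of real symmetric n×n matrices P such that both P and I − P are positive semidefinite (i.e., 0 ⪯ P ⪯ I). -/
/-!
Projections satisfy `0 ≤ Y ≤ 1` in the Loewner order, and this order interval is convex.
Conversely, if `0 ≤ P ≤ 1` then `P = U diag(λ) U*` with `λ ∈ [0,1]ⁿ`; the vector `λ` is a convex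
combination of vertices `ε ∈ {0,1}ⁿ` of the cube, and each `U diag(ε) U*` is a projection.
-/

open Matrix

open scoped MatrixOrder ComplexOrder

theorem map_mem_convexHull_isStarProjection {A B F : Type*} [AddCommMonoid A] [Module ℝ A]
    [Mul A] [Star A] [AddCommMonoid B] [Module ℝ B] [Mul B] [Star B] [FunLike F A B]
    [LinearMapClass F ℝ A B] [StarHomClass F A B] [MulHomClass F A B] (f : F) {x : A}
    (hx : x ∈ convexHull ℝ {p : A | IsStarProjection p}) :
    f x ∈ convexHull ℝ {p : B | IsStarProjection p} := by
  refine convexHull_mono ?_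
    ((f : A →ₗ[ℝ] B).image_convexHull _ ▸ Set.mem_image_of_mem f hx)
  rintro _ ⟨p, hp, rfl⟩
  exact hp.map f

namespace Matrix

variable {n R 𝕜 : Type*} [Fintype n] [DecidableEq n]

theorem isStarProjection_diagonal [Semiring R] [StarRing R] {d : n → R}
    (hd : ∀ i, d i = 0 ∨ d i = 1) : IsStarProjection (diagonal d) := by
  refine ⟨?_, ?_⟩
  · rw [IsIdempotentElem, diagonal_mul_diagonal]
    congr 1
    funext i
    rcases hd i with h | h <;> simp [h]
  · rw [IsSelfAdjoint, star_eq_conjTranspose, diagonal_conjTranspose]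
    congr 1
    funext i
    rcases hd i with h | h <;> simp [h]

variable [RCLike 𝕜]

theorem diagonal_mem_convexHull_isStarProjection {d : n → ℝ} (hd : ∀ i, d i ∈ Set.Icc 0 1) :
    diagonal (RCLike.ofReal ∘ d : n → 𝕜) ∈
      convexHull ℝ {P : Matrix n n 𝕜 | IsStarProjection P} := by
  let L : (n → ℝ) →ₗ[ℝ] Matrix n n 𝕜 :=
    diagonalLinearMap n ℝ 𝕜 ∘ₗ RCLike.ofRealLI.toLinearMap.compLeft n
  have hcube : d ∈ convexHull ℝ (Set.univ.pi fun _ ↦ ({0, 1} : Set ℝ)) :=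
    mem_convexHull_pi fun i _ ↦ by
      rw [convexHull_pair, segment_eq_Icc zero_le_one]
      exact hd i
  refine convexHull_mono ?_ (L.image_convexHull _ ▸ Set.mem_image_of_mem L hcube)
  rintro _ ⟨v, hv, rfl⟩
  refine isStarProjection_diagonal fun i ↦ ?_
  have hvi : v i = 0 ∨ v i = 1 := hv i (Set.mem_univ i)
  rcases hvi with h | h <;> simp [h]

theorem IsHermitian.eigenvalues_mem_Icc {P : Matrix n n 𝕜} (hP : P.IsHermitian)
    (h : P ∈ Set.Icc 0 1) (i : n) : hP.eigenvalues i ∈ Set.Icc 0 1 := by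
  have hi := hP.eigenvalues_mem_spectrum_real i
  constructor
  · exact (algebraMap_le_iff_le_spectrum (r := (0 : ℝ)) hP.isSelfAdjoint).1
      (by simpa using h.1) _ hi
  · exact (le_algebraMap_iff_spectrum_le (r := (1 : ℝ)) hP.isSelfAdjoint).1
      (by simpa using h.2) _ hi

theorem convexHull_isStarProjection :
    convexHull ℝ {P : Matrix n n 𝕜 | IsStarProjection P} = Set.Icc 0 1 := by
  refine (convexHull_min (fun _ hp ↦ hp.mem_Icc) (convex_Icc 0 1)).antisymm fun P hP ↦ ?_
  have hH : P.IsHermitian := hP.1.posSemidef.isHermitian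
  have hconj := map_mem_convexHull_isStarProjection
    (Unitary.conjStarAlgAut ℝ _ hH.eigenvectorUnitary)
    (diagonal_mem_convexHull_isStarProjection (hH.eigenvalues_mem_Icc hP))
  rw [hH.spectral_theorem]
  simpa using hconj

end Matrix

theorem stmt14_general (n : ℕ) :
    convexHull ℝ {Y : Matrix (Fin n) (Fin n) ℝ | Y.IsSymm ∧ Y * Y = Y} =
      {P : Matrix (Fin n) (Fin n) ℝ | P.PosSemidef ∧ (1 - P).PosSemidef} := by
  have hproj : {Y : Matrix (Fin n) (Fin n) ℝ | Y.IsSymm ∧ Y * Y = Y} =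
      {Y | IsStarProjection Y} := by
    ext Y
    simp [isStarProjection_iff', IsSymm, star_eq_conjTranspose, and_comm]
  have hIcc : {P : Matrix (Fin n) (Fin n) ℝ | P.PosSemidef ∧ (1 - P).PosSemidef} =
      Set.Icc 0 1 := by
    ext P
    simp [le_iff]
  rw [hproj, hIcc, convexHull_isStarProjection]

/-- First part of Lemma 1 (Overton–Womersley): the convex hull of the set of
orthogonal projection matrices equals `{P : 0 ⪯ P ⪯ I}`. -/
theorem stmt14 (n : ℕ) (hn : 1 ≤ n) :
    convexHull ℝ {Y : Matrix (Fin n) (Fin n) ℝ | Y.IsSymm ∧ Y * Y = Y} =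
      {P : Matrix (Fin n) (Fin n) ℝ | P.PosSemidef ∧ (1 - P).PosSemidef} :=
  stmt14_general n
end

section
/- Let n ≥ 1 and 1 ≤ k ≤ n. Let 𝒴_n^k denote the set of real symmetric n×n matrices Y with Y² = Y and trace(Y) ≤ k. Then the convex hull of 𝒴_n^k equals the set of real symmetric n×n matrices P such that 0 ⪯ P ⪯ I and trace(P) ≤ k. -/
/-!
The set `{P : 0 ⪯ P ⪯ I, trace P ≤ k}` is convex and contains every symmetric idempotent of
trace at most `k`. Conversely, diagonalize `P = U diag(μ) Uᵀ`: the eigenvalue vector `μ` lies in the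
polytope `{x ∈ [0,1]ⁿ : ∑ xᵢ ≤ k}`, whose extreme points are `0/1`-vectors because `k` is an
integer (a point with a fractional coordinate can be moved in both directions, along `eᵢ - eⱼ` if
there is a second fractional coordinate and along `eᵢ` otherwise). By Krein–Milman `μ` is a
convex combination of `0/1`-vectors of sum at most `k`, and conjugating their diagonal matrices
by `U` writes `P` as a convex combination of projections of trace at most `k`.
-/

open Matrix Set Unitary
open scoped MatrixOrder ComplexOrder

theorem eq_zero_of_add_mem_of_sub_mem_extremePoints {𝕜 E : Type*} [Field 𝕜] [LinearOrder 𝕜]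
    [IsStrictOrderedRing 𝕜] [AddCommGroup E] [Module 𝕜 E] {A : Set E} {x v : E}
    (hx : x ∈ A.extremePoints 𝕜) (hadd : x + v ∈ A) (hsub : x - v ∈ A) : v = 0 := by
  have hmid : x ∈ openSegment 𝕜 (x + v) (x - v) :=
    ⟨1 / 2, 1 / 2, by norm_num, by norm_num, by norm_num, by module⟩
  simpa using ((mem_extremePoints.1 hx).2 _ hadd _ hsub hmid).1

theorem Finset.exists_nat_sum_eq_of_forall_eq_zero_or_one {ι : Type*} {s : Finset ι}
    {x : ι → ℝ} (h : ∀ j ∈ s, x j = 0 ∨ x j = 1) : ∃ m : ℕ, ∑ j ∈ s, x j = m :=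
  ⟨∑ j ∈ s, if x j = 1 then 1 else 0, by
    push_cast
    refine Finset.sum_congr rfl fun j hj => ?_
    rcases h j hj with h | h <;> simp [h]⟩

theorem add_mem_Icc_zero_one_of_abs_le {ι : Type*} {x v : ι → ℝ}
    (h : ∀ l, |v l| ≤ x l ∧ |v l| ≤ 1 - x l) :
    x + v ∈ Icc 0 1 :=
  ⟨fun l => show 0 ≤ x l + v l by linarith [neg_abs_le (v l), (h l).1],
    fun l => show x l + v l ≤ 1 by linarith [le_abs_self (v l), (h l).2]⟩

section CappedCube

variable {ι : Type*} [Fintype ι]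

theorem eq_zero_of_mem_extremePoints_of_abs_le {k : ℕ} {x v : ι → ℝ}
    (hx : x ∈ (Icc (0 : ι → ℝ) 1 ∩ {x | ∑ i, x i ≤ k}).extremePoints ℝ)
    (hv : ∀ l, |v l| ≤ x l ∧ |v l| ≤ 1 - x l) (hsum : ∑ l, x l + |∑ l, v l| ≤ k) : v = 0 := by
  refine eq_zero_of_add_mem_of_sub_mem_extremePoints hx
    ⟨add_mem_Icc_zero_one_of_abs_le hv, ?_⟩ ⟨?_, ?_⟩
  · simp only [mem_ofPred_eq, Pi.add_apply, Finset.sum_add_distrib]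
    linarith [le_abs_self (∑ l, v l)]
  · simpa [sub_eq_add_neg] using add_mem_Icc_zero_one_of_abs_le (v := -v) (by simpa using hv)
  · simp only [mem_ofPred_eq, Pi.sub_apply, Finset.sum_sub_distrib]
    linarith [neg_abs_le (∑ l, v l)]

theorem eq_zero_or_eq_one_of_mem_extremePoints [DecidableEq ι] {k : ℕ} {x : ι → ℝ}
    (hx : x ∈ (Icc (0 : ι → ℝ) 1 ∩ {x | ∑ i, x i ≤ k}).extremePoints ℝ) (i : ι) :
    x i = 0 ∨ x i = 1 := by
  obtain ⟨⟨hx0, hx1⟩, hxk : ∑ l, x l ≤ k⟩ := extremePoints_subset hx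
  have hfrac : ∀ j, ¬(x j = 0 ∨ x j = 1) → 0 < min (x j) (1 - x j) := fun j hj => by
    push Not at hj
    exact lt_min ((hx0 j).lt_of_ne' hj.1) (sub_pos.2 ((hx1 j).lt_of_ne hj.2))
  by_contra hi
  by_cases hj : ∃ j ≠ i, ¬(x j = 0 ∨ x j = 1)
  · obtain ⟨j, hji, hj⟩ := hj
    set ε := min (min (x i) (1 - x i)) (min (x j) (1 - x j))
    have hε : 0 < ε := lt_min (hfrac i hi) (hfrac j hj)
    have h := eq_zero_of_mem_extremePoints_of_abs_le hx (v := Pi.single i ε - Pi.single j ε)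
      (fun l => ?_) (by simpa using hxk)
    · simpa [hji.symm, hε.ne'] using congrFun h i
    rcases eq_or_ne l i with rfl | hli
    · simp [hji.symm, abs_of_pos hε, ε]
    rcases eq_or_ne l j with rfl | hlj
    · simp [hji, abs_of_pos hε, ε]
    · simpa [hli, hlj] using ⟨hx0 l, hx1 l⟩
  · push Not at hj
    obtain ⟨m, hm⟩ := Finset.exists_nat_sum_eq_of_forall_eq_zero_or_one
      (s := Finset.univ.erase i) fun j hj' => hj j (Finset.ne_of_mem_erase hj')
    have hsum : ∑ l, x l = x i + m := by rw [← Finset.add_sum_erase _ _ (Finset.mem_univ i), hm]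
    have hε : 0 < min (x i) (1 - x i) := hfrac i hi
    -- `m < k` between integers leaves room to raise `x i` up to `1`.
    have hmk : (m : ℝ) + 1 ≤ k := by
      exact_mod_cast Nat.cast_lt.1 (by linarith [min_le_left (x i) (1 - x i)] : (m : ℝ) < k)
    set ε := min (x i) (1 - x i)
    have h := eq_zero_of_mem_extremePoints_of_abs_le hx (v := Pi.single i ε)
      (fun l => ?_) (by simp [abs_of_pos hε]; linarith [min_le_right (x i) (1 - x i)])
    · simpa [hε.ne'] using congrFun h i
    rcases eq_or_ne l i with rfl | hli
    · simp [abs_of_pos hε, ε]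
    · simpa [hli] using ⟨hx0 l, hx1 l⟩

theorem convexHull_eq_Icc_inter_sum_le [DecidableEq ι] (k : ℕ) :
    convexHull ℝ {x : ι → ℝ | (∀ i, x i = 0 ∨ x i = 1) ∧ ∑ i, x i ≤ k} =
      Icc 0 1 ∩ {x | ∑ i, x i ≤ (k : ℝ)} := by
  set C := Icc (0 : ι → ℝ) 1 ∩ {x | ∑ i, x i ≤ k}
  set B := {x : ι → ℝ | (∀ i, x i = 0 ∨ x i = 1) ∧ ∑ i, x i ≤ k}
  have hC : IsCompact C := isCompact_Icc.inter_right (isClosed_le (by fun_prop) continuous_const)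
  have hconv : Convex ℝ C := (convex_Icc 0 1).inter <| convex_halfSpace_le
    ⟨fun x y => Finset.sum_add_distrib, fun c x => (Finset.mul_sum ..).symm⟩ _
  have hB : B.Finite := (Set.Finite.pi (t := fun _ => {0, 1}) fun _ => by simp).subset
    fun x hx => by simpa using hx.1
  have hBC : B ⊆ C := fun x hx => ⟨⟨fun i => by rcases hx.1 i with h | h <;> simp [h],
    fun i => by rcases hx.1 i with h | h <;> simp [h]⟩, hx.2⟩
  refine (convexHull_min hBC hconv).antisymm ?_
  calc C = closure (convexHull ℝ (C.extremePoints ℝ)) :=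
        (closure_convexHull_extremePoints hC hconv).symm
    _ ⊆ closure (convexHull ℝ B) := closure_mono <| convexHull_mono fun x hx =>
        ⟨eq_zero_or_eq_one_of_mem_extremePoints hx, (extremePoints_subset hx).2⟩
    _ = convexHull ℝ B := (hB.isCompact_convexHull ℝ).isClosed.closure_eq

end CappedCube

theorem Matrix.diagonal_le_diagonal_iff {n 𝕜 : Type*} [DecidableEq n] [RCLike 𝕜]
    {d e : n → 𝕜} :
    diagonal d ≤ diagonal e ↔ d ≤ e := by
  simp only [le_iff, diagonal_sub, posSemidef_diagonal_iff, Pi.le_def, sub_nonneg]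

theorem Matrix.trace_conjStarAlgAut {n R S : Type*} [Fintype n] [DecidableEq n] [CommRing R]
    [StarRing R] [SMul S (Matrix n n R)] [IsScalarTower S (Matrix n n R) (Matrix n n R)]
    [SMulCommClass S (Matrix n n R) (Matrix n n R)] (U : unitary (Matrix n n R))
    (A : Matrix n n R) :
    (conjStarAlgAut S _ U A).trace = A.trace := by
  rw [conjStarAlgAut_apply, trace_mul_cycle, coe_star_mul_self, one_mul]

theorem Matrix.isStarProjection_diagonal_s15 {n R : Type*} [Fintype n] [DecidableEq n] [Semiring R]
    [StarRing R] {d : n → R} (h : ∀ i, IsStarProjection (d i)) :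
    IsStarProjection (diagonal d) where
  isIdempotentElem := by
    rw [IsIdempotentElem, diagonal_mul_diagonal]
    exact congrArg diagonal (funext fun i => (h i).isIdempotentElem.eq)
  isSelfAdjoint := by
    rw [IsSelfAdjoint, star_eq_conjTranspose, diagonal_conjTranspose]
    exact congrArg diagonal (funext fun i => (h i).isSelfAdjoint.star_eq)

theorem Matrix.convexHull_isStarProjection_trace_le {n : Type*} [Fintype n] [DecidableEq n]
    (k : ℕ) :
    convexHull ℝ {P : Matrix n n ℝ | IsStarProjection P ∧ P.trace ≤ k} =
      Icc 0 1 ∩ {P | P.trace ≤ (k : ℝ)} := by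
  have hconv : Convex ℝ (Icc (0 : Matrix n n ℝ) 1 ∩ {P | P.trace ≤ k}) :=
    (convex_Icc 0 1).inter (convex_halfSpace_le (traceLinearMap n ℝ ℝ).isLinear _)
  refine subset_antisymm (convexHull_min (fun P hP => ?_) hconv) ?_
  · exact ⟨hP.1.mem_Icc, hP.2⟩
  rintro P ⟨hP, htr⟩
  have hH : P.IsHermitian := hP.1.posSemidef.isHermitian
  set φ := conjStarAlgAut ℝ (Matrix n n ℝ) hH.eigenvectorUnitary
  set μ := hH.eigenvalues
  have hPμ : P = φ (diagonal μ) := hH.spectral_theorem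
  have hμ : μ ∈ Icc 0 1 ∩ {x | ∑ i, x i ≤ (k : ℝ)} := by
    refine ⟨⟨?_, ?_⟩, ?_⟩
    · rw [← diagonal_le_diagonal_iff, ← map_le_map_iff φ, ← hPμ]
      simpa using hP.1
    · rw [← diagonal_le_diagonal_iff, ← map_le_map_iff φ, ← hPμ]
      simpa using hP.2
    · show ∑ i, μ i ≤ k
      rw [← trace_diagonal μ, ← trace_conjStarAlgAut (S := ℝ) hH.eigenvectorUnitary, ← hPμ]
      exact htr
  let f : (n → ℝ) →ₗ[ℝ] Matrix n n ℝ := φ.toAlgEquiv.toLinearMap ∘ₗ diagonalLinearMap n ℝ ℝ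
  rw [← convexHull_eq_Icc_inter_sum_le] at hμ
  have hfμ := mem_image_of_mem f hμ
  rw [f.image_convexHull] at hfμ
  rw [hPμ]
  refine convexHull_mono ?_ hfμ
  rintro _ ⟨y, ⟨hy, hyk⟩, rfl⟩
  refine ⟨(isStarProjection_diagonal_s15 fun i => ?_).map φ, ?_⟩
  · rcases hy i with h | h <;> rw [h]
    exacts [.zero ℝ, .one ℝ]
  · simpa [f, trace_conjStarAlgAut] using hyk

theorem stmt15_general (n k : ℕ) :
    convexHull ℝ
        {Y : Matrix (Fin n) (Fin n) ℝ | Y.IsSymm ∧ Y * Y = Y ∧ Y.trace ≤ (k : ℝ)} =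
      {P : Matrix (Fin n) (Fin n) ℝ |
        P.PosSemidef ∧ (1 - P).PosSemidef ∧ P.trace ≤ (k : ℝ)} := by
  convert convexHull_isStarProjection_trace_le (n := Fin n) k using 1
  · congr 1
    ext Y
    simp only [mem_ofPred_eq, isStarProjection_iff', ← and_assoc]
    rw [← isHermitian_iff_isSymm, and_comm (a := Y.IsHermitian)]
    rfl
  · ext P
    simp only [mem_ofPred_eq, mem_inter_iff, mem_Icc, le_iff, sub_zero, and_assoc]

/-- Second part of Lemma 1 (Overton–Womersley): the convex hull of the set of
orthogonal projection matrices of rank at most `k` (i.e. trace at most `k`)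
equals `{P : 0 ⪯ P ⪯ I, trace(P) ≤ k}`. -/
theorem stmt15 (n k : ℕ) (hn : 1 ≤ n) (hk1 : 1 ≤ k) (hkn : k ≤ n) :
    convexHull ℝ
        {Y : Matrix (Fin n) (Fin n) ℝ | Y.IsSymm ∧ Y * Y = Y ∧ Y.trace ≤ (k : ℝ)} =
      {P : Matrix (Fin n) (Fin n) ℝ |
        P.PosSemidef ∧ (1 - P).PosSemidef ∧ P.trace ≤ (k : ℝ)} :=
  stmt15_general n k
end

section
/- Let n ≥ 1 and 1 ≤ k ≤ n. The set of extreme points of the convex set {P real symmetric n×n : 0 ⪯ P ⪯ I} is exactly the set of real symmetric n×n matrices Y with Y² = Y, and the set of extreme points of {P real symmetric n×n : 0 ⪯ P ⪯ I, trace(P) ≤ k} is exactly the set of real symmetric n×n matrices Y with Y² = Y and trace(Y) ≤ k. -/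
/-!
Conjugation by an orthogonal matrix of eigenvectors identifies the matrices sharing that
eigenbasis with their vectors of eigenvalues, and maps `{μ ∈ [0,1]ⁿ | ∑ μ ≤ k}` onto the
corresponding part of `{P | 0 ⪯ P ⪯ I, tr P ≤ k}`. So the eigenvalue vector of an extreme
point `P` is extreme in `{μ ∈ [0,1]ⁿ | ∑ μ ≤ k}`. There a fractional coordinate can be moved
in both directions: alone if `∑ μ < k`, and against a second fractional coordinate if
`∑ μ = k`, which exists because `k` is an integer. Hence all eigenvalues are `0` or `1`, and `P`
is a projection. Conversely, if a projection `Y` is a proper convex combination of `A` and `B`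
with `0 ⪯ A, B ⪯ I`, positivity forces `A` to vanish on `ker Y` and to fix `range Y`.
The first statement is the case `k = n`, since `tr P ≤ n` on the whole interval `0 ⪯ P ⪯ I`.
-/

open Matrix Set

section Convex

variable {𝕜 E F : Type*} [AddCommGroup E] [AddCommGroup F] {x : E}

theorem eq_zero_of_mem_extremePoints_of_add_mem_of_sub_mem [Field 𝕜] [LinearOrder 𝕜]
    [IsStrictOrderedRing 𝕜] [Module 𝕜 E] {A : Set E} {d : E} (hx : x ∈ A.extremePoints 𝕜)
    (hadd : x + d ∈ A) (hsub : x - d ∈ A) : d = 0 := by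
  have hseg : x ∈ openSegment 𝕜 (x + d) (x - d) :=
    ⟨1 / 2, 1 / 2, by norm_num, by norm_num, by norm_num, by module⟩
  simpa using hx.2 hadd hsub hseg

theorem mem_extremePoints_of_injective_of_mapsTo [Semiring 𝕜] [PartialOrder 𝕜] [Module 𝕜 E]
    [Module 𝕜 F] {K : Set E} {S : Set F} (f : E →ₗ[𝕜] F) (hf : Function.Injective f)
    (hKS : MapsTo f K S) (hx : x ∈ K) (hfx : f x ∈ S.extremePoints 𝕜) :
    x ∈ K.extremePoints 𝕜 := by
  refine ⟨hx, fun y hy z hz hseg => ?_⟩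
  obtain ⟨a, b, ha, hb, hab, rfl⟩ := hseg
  exact hf (hfx.2 (hKS hy) (hKS hz) ⟨a, b, ha, hb, hab, by simp⟩)

end Convex

section EigenvalueVectors

open scoped Finset

variable {ι : Type*} [Fintype ι] {k : ℕ} {μ : ι → ℝ}

theorem eq_zero_of_mem_extremePoints_of_abs_le_s16 {d : ι → ℝ}
    (hμ : μ ∈ extremePoints ℝ {μ : ι → ℝ | 0 ≤ μ ∧ μ ≤ 1 ∧ ∑ i, μ i ≤ k})
    (hd : ∀ j, |d j| ≤ μ j ∧ |d j| ≤ 1 - μ j) (hsum : ∑ j, μ j + |∑ j, d j| ≤ k) : d = 0 := by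
  have hdj : ∀ j, -μ j ≤ d j ∧ d j ≤ μ j ∧ -(1 - μ j) ≤ d j ∧ d j ≤ 1 - μ j := fun j =>
    ⟨(neg_le_neg (hd j).1).trans (neg_abs_le _), (le_abs_self _).trans (hd j).1,
      (neg_le_neg (hd j).2).trans (neg_abs_le _), (le_abs_self _).trans (hd j).2⟩
  have htot := abs_le.1 (le_refl |∑ j, d j|)
  refine eq_zero_of_mem_extremePoints_of_add_mem_of_sub_mem hμ ?_ ?_ <;>
    simp only [mem_ofPred_eq, Pi.le_def, Pi.add_apply, Pi.sub_apply, Pi.zero_apply,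
      Pi.one_apply, Finset.sum_add_distrib, Finset.sum_sub_distrib] <;>
    refine ⟨fun j => ?_, fun j => ?_, ?_⟩ <;>
    first | linarith [hdj j] | linarith

variable [DecidableEq ι]

theorem exists_ne_of_sum_eq_natCast (hsum : ∑ j, μ j = k) {i : ι}
    (hi : μ i ∈ Ioo 0 1) : ∃ j ≠ i, μ j ≠ 0 ∧ μ j ≠ 1 := by
  by_contra! h
  have hrest : ∑ j ∈ Finset.univ.erase i, μ j = #{j ∈ Finset.univ.erase i | μ j = 1} := by
    rw [Finset.natCast_card_filter]
    refine Finset.sum_congr rfl fun j hj => ?_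
    rcases eq_or_ne (μ j) 0 with h0 | h0
    · simp [h0]
    · simp [h j (Finset.ne_of_mem_erase hj) h0]
  have hint : μ i = ((k - #{j ∈ Finset.univ.erase i | μ j = 1} : ℤ) : ℝ) := by
    rw [← Finset.add_sum_erase _ _ (Finset.mem_univ i), hrest] at hsum
    push_cast
    linarith
  rw [hint] at hi
  obtain ⟨h0, h1⟩ := hi
  norm_cast at h0 h1
  omega

theorem notMem_Ioo_of_mem_extremePoints_of_sum_lt
    (hμ : μ ∈ extremePoints ℝ {μ : ι → ℝ | 0 ≤ μ ∧ μ ≤ 1 ∧ ∑ i, μ i ≤ k})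
    (hlt : ∑ j, μ j < k) (i : ι) : μ i ∉ Ioo 0 1 := by
  rintro ⟨hi0, hi1⟩
  obtain ⟨e, he, hei, hei', hek⟩ : ∃ e > 0, e ≤ μ i ∧ e ≤ 1 - μ i ∧ e ≤ k - ∑ j, μ j :=
    ⟨min (min (μ i) (1 - μ i)) (k - ∑ j, μ j), by simp [hi0, hi1, hlt],
      by simp, by simp, by simp⟩
  set d : ι → ℝ := e • Pi.single i 1
  have hd : ∀ m, |d m| ≤ μ m ∧ |d m| ≤ 1 - μ m := by
    intro m
    rcases eq_or_ne m i with rfl | hm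
    · simpa [d, abs_of_pos he] using ⟨hei, hei'⟩
    · simpa [d, hm] using ⟨hμ.1.1 m, hμ.1.2.1 m⟩
  have htot : ∑ j, μ j + |∑ j, d j| ≤ k := by
    simp only [d, Pi.smul_apply, smul_eq_mul, ← Finset.mul_sum, Finset.sum_pi_single',
      Finset.mem_univ, if_true, mul_one, abs_of_pos he]
    linarith
  have hd0 := congrFun (eq_zero_of_mem_extremePoints_of_abs_le_s16 hμ hd htot) i
  simp [d, he.ne'] at hd0

theorem notMem_Ioo_of_mem_extremePoints_of_sum_eq
    (hμ : μ ∈ extremePoints ℝ {μ : ι → ℝ | 0 ≤ μ ∧ μ ≤ 1 ∧ ∑ i, μ i ≤ k})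
    (heq : ∑ j, μ j = k) (i : ι) : μ i ∉ Ioo 0 1 := by
  intro hi
  obtain ⟨j, hji, hj0, hj1⟩ := exists_ne_of_sum_eq_natCast heq hi
  replace hj0 : 0 < μ j := (hμ.1.1 j).lt_of_ne hj0.symm
  replace hj1 : μ j < 1 := (hμ.1.2.1 j).lt_of_ne hj1
  obtain ⟨e, he, hei, hei', hej, hej'⟩ :
      ∃ e > 0, e ≤ μ i ∧ e ≤ 1 - μ i ∧ e ≤ μ j ∧ e ≤ 1 - μ j :=
    ⟨min (min (μ i) (1 - μ i)) (min (μ j) (1 - μ j)), by simp [hi.1, hi.2, hj0, hj1],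
      by simp, by simp, by simp, by simp⟩
  set d : ι → ℝ := e • (Pi.single i 1 - Pi.single j 1)
  have hd : ∀ m, |d m| ≤ μ m ∧ |d m| ≤ 1 - μ m := by
    intro m
    rcases eq_or_ne m i with rfl | hmi
    · simpa [d, hji.symm, abs_of_pos he] using ⟨hei, hei'⟩
    rcases eq_or_ne m j with rfl | hmj
    · simpa [d, hmi, abs_of_pos he] using ⟨hej, hej'⟩
    · simpa [d, hmi, hmj] using ⟨hμ.1.1 m, hμ.1.2.1 m⟩
  have htot : ∑ j, μ j + |∑ j, d j| ≤ k := by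
    simp [d, heq, ← Finset.mul_sum, Finset.sum_sub_distrib]
  have hd0 := congrFun (eq_zero_of_mem_extremePoints_of_abs_le_s16 hμ hd htot) i
  simp [d, hji.symm, he.ne'] at hd0

theorem eq_zero_or_eq_one_of_mem_extremePoints_s16
    (hμ : μ ∈ extremePoints ℝ {μ : ι → ℝ | 0 ≤ μ ∧ μ ≤ 1 ∧ ∑ i, μ i ≤ k}) (i : ι) :
    μ i = 0 ∨ μ i = 1 := by
  have hi : μ i ∉ Ioo 0 1 := hμ.1.2.2.lt_or_eq.elim
    (notMem_Ioo_of_mem_extremePoints_of_sum_lt hμ · i)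
    (notMem_Ioo_of_mem_extremePoints_of_sum_eq hμ · i)
  by_contra! h
  exact hi ⟨(hμ.1.1 i).lt_of_ne h.1.symm, (hμ.1.2.1 i).lt_of_ne h.2⟩

end EigenvalueVectors

namespace Matrix

variable {ι : Type*} [Fintype ι]

theorem PosSemidef.mul_eq_zero_of_add_mul_eq_zero {A B M : Matrix ι ι ℝ} (hA : A.PosSemidef)
    (hB : B.PosSemidef) (h : (A + B) * M = 0) : A * M = 0 := by
  refine ext_iff_mulVec.2 fun v => ?_
  set x := M *ᵥ v
  have hx : x ⬝ᵥ A *ᵥ x + x ⬝ᵥ B *ᵥ x = 0 := by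
    rw [← dotProduct_add, ← add_mulVec, mulVec_mulVec, h, zero_mulVec, dotProduct_zero]
  have hA0 := hA.dotProduct_mulVec_nonneg x
  have hB0 := hB.dotProduct_mulVec_nonneg x
  rw [star_trivial] at hA0 hB0
  rw [← mulVec_mulVec, zero_mulVec]
  exact (hA.dotProduct_mulVec_zero_iff x).1 (by rw [star_trivial]; linarith)

theorem IsSymm.posSemidef_of_isIdempotentElem {Y : Matrix ι ι ℝ} (hs : Y.IsSymm)
    (hY : IsIdempotentElem Y) : Y.PosSemidef := by
  have hH : Yᴴ = Y := isHermitian_iff_isSymm.2 hs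
  rw [show Y = Yᴴ * Y by rw [hH, hY.eq]]
  exact posSemidef_conjTranspose_mul_self Y

theorem trace_le_card_of_posSemidef_one_sub [DecidableEq ι] {P : Matrix ι ι ℝ}
    (hP : (1 - P).PosSemidef) : P.trace ≤ Fintype.card ι := by
  have := hP.trace_nonneg
  rw [trace_sub, trace_one] at this
  linarith

variable [DecidableEq ι]

theorem mem_extremePoints_of_isSymm_of_isIdempotentElem {Y : Matrix ι ι ℝ} (hs : Y.IsSymm)
    (hY : IsIdempotentElem Y) :
    Y ∈ extremePoints ℝ {P : Matrix ι ι ℝ | P.PosSemidef ∧ (1 - P).PosSemidef} := by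
  refine ⟨⟨hs.posSemidef_of_isIdempotentElem hY,
    (isSymm_one.sub hs).posSemidef_of_isIdempotentElem hY.one_sub⟩, ?_⟩
  rintro A ⟨hA, hA'⟩ B ⟨hB, hB'⟩ ⟨a, b, ha, hb, hab, hAB⟩
  have hker : a • (A * (1 - Y)) = 0 := by
    rw [← smul_mul_assoc]
    refine (hA.smul ha.le).mul_eq_zero_of_add_mul_eq_zero (hB.smul hb.le) ?_
    rw [hAB, mul_sub, mul_one, hY.eq, sub_self]
  have hran : a • ((1 - A) * Y) = 0 := by
    rw [← smul_mul_assoc]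
    refine (hA'.smul ha.le).mul_eq_zero_of_add_mul_eq_zero (hB'.smul hb.le) ?_
    have : a • (1 - A) + b • (1 - B) = 1 - Y := by
      rw [← hAB]
      linear_combination (norm := module) hab • (1 : Matrix ι ι ℝ)
    rw [this, sub_mul, one_mul, hY.eq, sub_self]
  rw [smul_eq_zero_iff_right ha.ne', mul_sub, mul_one, sub_eq_zero] at hker
  rw [smul_eq_zero_iff_right ha.ne', sub_mul, one_mul, sub_eq_zero] at hran
  exact hker.trans hran.symm

noncomputable def unitaryConjDiagonal (U : unitary (Matrix ι ι ℝ)) :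
    (ι → ℝ) →ₐ[ℝ] Matrix ι ι ℝ :=
  (Unitary.conjStarAlgAut ℝ _ U).toAlgEquiv.toAlgHom.comp (diagonalAlgHom ℝ)

@[simp]
theorem unitaryConjDiagonal_apply (U : unitary (Matrix ι ι ℝ)) (μ : ι → ℝ) :
    unitaryConjDiagonal U μ = U * diagonal μ * star (U : Matrix ι ι ℝ) := rfl

theorem unitaryConjDiagonal_injective (U : unitary (Matrix ι ι ℝ)) :
    Function.Injective (unitaryConjDiagonal U) :=
  (Unitary.conjStarAlgAut ℝ _ U).injective.comp diagonal_injective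

theorem posSemidef_unitaryConjDiagonal_iff (U : unitary (Matrix ι ι ℝ)) (μ : ι → ℝ) :
    (unitaryConjDiagonal U μ).PosSemidef ↔ 0 ≤ μ := by
  rw [unitaryConjDiagonal_apply, Unitary.isUnit_coe.posSemidef_star_right_conjugate_iff,
    posSemidef_diagonal_iff]
  exact Pi.le_def.symm

theorem trace_unitaryConjDiagonal (U : unitary (Matrix ι ι ℝ)) (μ : ι → ℝ) :
    (unitaryConjDiagonal U μ).trace = ∑ i, μ i := by
  rw [unitaryConjDiagonal_apply, trace_mul_cycle, Unitary.coe_star_mul_self, one_mul,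
    trace_diagonal]

theorem unitaryConjDiagonal_mem_iff (U : unitary (Matrix ι ι ℝ)) (k : ℝ) (μ : ι → ℝ) :
    unitaryConjDiagonal U μ ∈
        {P : Matrix ι ι ℝ | P.PosSemidef ∧ (1 - P).PosSemidef ∧ P.trace ≤ k} ↔
      μ ∈ {μ : ι → ℝ | 0 ≤ μ ∧ μ ≤ 1 ∧ ∑ i, μ i ≤ k} := by
  simp only [mem_ofPred_eq, ← map_one (unitaryConjDiagonal U), ← map_sub,
    posSemidef_unitaryConjDiagonal_iff, sub_nonneg, trace_unitaryConjDiagonal]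

theorem IsHermitian.eq_unitaryConjDiagonal_eigenvalues {P : Matrix ι ι ℝ} (hP : P.IsHermitian) :
    P = unitaryConjDiagonal hP.eigenvectorUnitary hP.eigenvalues := by
  conv_lhs => rw [hP.spectral_theorem]
  simp

theorem isIdempotentElem_of_mem_extremePoints {k : ℕ} {P : Matrix ι ι ℝ}
    (hP : P ∈ extremePoints ℝ
      {P : Matrix ι ι ℝ | P.PosSemidef ∧ (1 - P).PosSemidef ∧ P.trace ≤ k}) :
    IsIdempotentElem P := by
  have hH : P.IsHermitian := hP.1.1.isHermitian
  set f := unitaryConjDiagonal hH.eigenvectorUnitary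
  have hPf : P = f hH.eigenvalues := hH.eq_unitaryConjDiagonal_eigenvalues
  rw [hPf] at hP ⊢
  have hext : hH.eigenvalues ∈ extremePoints ℝ {μ : ι → ℝ | 0 ≤ μ ∧ μ ≤ 1 ∧ ∑ i, μ i ≤ k} :=
    mem_extremePoints_of_injective_of_mapsTo f.toLinearMap (unitaryConjDiagonal_injective _)
      (fun μ hμ => (unitaryConjDiagonal_mem_iff _ _ μ).2 hμ)
      ((unitaryConjDiagonal_mem_iff _ _ _).1 hP.1) hP
  have hidem : IsIdempotentElem hH.eigenvalues := funext fun i => by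
    rcases eq_zero_or_eq_one_of_mem_extremePoints_s16 hext i with h | h <;> simp [h]
  exact hidem.map f

end Matrix

theorem stmt16_general (n k : ℕ) :
    Set.extremePoints ℝ
        {P : Matrix (Fin n) (Fin n) ℝ | P.PosSemidef ∧ (1 - P).PosSemidef} =
      {Y : Matrix (Fin n) (Fin n) ℝ | Y.IsSymm ∧ Y * Y = Y} ∧
    Set.extremePoints ℝ
        {P : Matrix (Fin n) (Fin n) ℝ |
          P.PosSemidef ∧ (1 - P).PosSemidef ∧ P.trace ≤ (k : ℝ)} =
      {Y : Matrix (Fin n) (Fin n) ℝ | Y.IsSymm ∧ Y * Y = Y ∧ Y.trace ≤ (k : ℝ)} := by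
  have hsub : ∀ k : ℕ, {P : Matrix (Fin n) (Fin n) ℝ |
      P.PosSemidef ∧ (1 - P).PosSemidef ∧ P.trace ≤ (k : ℝ)} ⊆
        {P | P.PosSemidef ∧ (1 - P).PosSemidef} := fun _ _ hP => ⟨hP.1, hP.2.1⟩
  refine ⟨Set.ext fun P => ⟨fun hP => ?_, fun ⟨hs, hY⟩ => ?_⟩,
    Set.ext fun P => ⟨fun hP => ?_, fun ⟨hs, hY, htr⟩ => ?_⟩⟩
  · have htr : P.trace ≤ (n : ℝ) := by
      simpa using trace_le_card_of_posSemidef_one_sub hP.1.2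
    have hPn := inter_extremePoints_subset_extremePoints_of_subset (hsub n)
      ⟨⟨hP.1.1, hP.1.2, htr⟩, hP⟩
    exact ⟨isHermitian_iff_isSymm.1 hP.1.1.isHermitian,
      isIdempotentElem_of_mem_extremePoints hPn⟩
  · exact mem_extremePoints_of_isSymm_of_isIdempotentElem hs hY
  · exact ⟨isHermitian_iff_isSymm.1 hP.1.1.isHermitian,
      isIdempotentElem_of_mem_extremePoints hP, hP.1.2.2⟩
  · have hYext := mem_extremePoints_of_isSymm_of_isIdempotentElem hs hY
    exact inter_extremePoints_subset_extremePoints_of_subset (hsub k)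
      ⟨⟨hYext.1.1, hYext.1.2, htr⟩, hYext⟩

/-- Extreme-point statement of Lemma 1 (Overton–Womersley): the extreme points of
`{P : 0 ⪯ P ⪯ I}` are exactly the orthogonal projection matrices, and the extreme
points of `{P : 0 ⪯ P ⪯ I, trace(P) ≤ k}` are exactly the orthogonal projection
matrices of trace at most `k`. -/
theorem stmt16 (n k : ℕ) (hn : 1 ≤ n) (hk1 : 1 ≤ k) (hkn : k ≤ n) :
    Set.extremePoints ℝ
        {P : Matrix (Fin n) (Fin n) ℝ | P.PosSemidef ∧ (1 - P).PosSemidef} =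
      {Y : Matrix (Fin n) (Fin n) ℝ | Y.IsSymm ∧ Y * Y = Y} ∧
    Set.extremePoints ℝ
        {P : Matrix (Fin n) (Fin n) ℝ |
          P.PosSemidef ∧ (1 - P).PosSemidef ∧ P.trace ≤ (k : ℝ)} =
      {Y : Matrix (Fin n) (Fin n) ℝ | Y.IsSymm ∧ Y * Y = Y ∧ Y.trace ≤ (k : ℝ)} :=
  stmt16_general n k
end

section
/- Let n ≥ 1 and k ≥ 1 be integers. Define T = {(x, z, t) ∈ ℝ^n × ℝ^n × ℝ : each z_i ∈ {0,1}, t ≥ (∑_{i=1}^n x_i)², ∑_{i=1}^n z_i ≤ k, and x_i = 0 whenever z_i = 0}, and T^c = {(x, z, t) ∈ ℝ^n × ℝ^n × ℝ : 0 ≤ z_i ≤ 1 for all i, t ≥ 0, t · min(1, ∑_{i=1}^n z_i) ≥ (∑_{i=1}^n x_i)², and ∑_{i=1}^n z_i ≤ k}. Then T^c is a closed convex set containing T; consequently the closure of the convex hull of T is contained in T^c. -/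
private lemma cone_aux17 {X Y t s u v a b : ℝ} (ht : 0 ≤ t) (hu : 0 ≤ u) (hs : 0 ≤ s) (hv : 0 ≤ v)
    (h1 : X^2 ≤ t*s) (h2 : Y^2 ≤ u*v) (ha : 0 ≤ a) (hb : 0 ≤ b) :
    (a*X + b*Y)^2 ≤ (a*t + b*u) * (a*s + b*v) := by
  have hpos : 0 ≤ t*v + u*s := by positivity
  have h3 : (2*(X*Y))^2 ≤ (t*v + u*s)^2 := by
    nlinarith [sq_nonneg (t*v - u*s), mul_le_mul h1 h2 (sq_nonneg Y) (mul_nonneg ht hs)]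
  have key : 2*(X*Y) ≤ t*v + u*s := by
    nlinarith [h3, hpos, sq_nonneg (2*(X*Y) - (t*v+u*s)), sq_nonneg (2*(X*Y) + (t*v+u*s))]
  nlinarith [mul_nonneg ha hb, mul_nonneg (mul_nonneg ha ha) (sub_nonneg.2 h1),
    mul_nonneg (mul_nonneg hb hb) (sub_nonneg.2 h2),
    mul_nonneg (mul_nonneg ha hb) (sub_nonneg.2 key)]

/-- Valid-inequality direction of Lemma 3 (Atamtürk–Gómez rank-one convexification):
`T^c` is a closed convex set containing `T`, so the closed convex hull of `T` is
contained in `T^c`. -/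
theorem stmt17 (n k : ℕ) (hn : 1 ≤ n) (hk : 1 ≤ k) :
    let T : Set ((Fin n → ℝ) × (Fin n → ℝ) × ℝ) :=
      {q | (∀ i, q.2.1 i = 0 ∨ q.2.1 i = 1) ∧
           (∑ i, q.1 i) ^ 2 ≤ q.2.2 ∧
           (∑ i, q.2.1 i) ≤ (k : ℝ) ∧
           ∀ i, q.2.1 i = 0 → q.1 i = 0}
    let Tc : Set ((Fin n → ℝ) × (Fin n → ℝ) × ℝ) :=
      {q | (∀ i, 0 ≤ q.2.1 i ∧ q.2.1 i ≤ 1) ∧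
           0 ≤ q.2.2 ∧
           (∑ i, q.1 i) ^ 2 ≤ q.2.2 * min 1 (∑ i, q.2.1 i) ∧
           (∑ i, q.2.1 i) ≤ (k : ℝ)}
    IsClosed Tc ∧ Convex ℝ Tc ∧ T ⊆ Tc ∧ closure (convexHull ℝ T) ⊆ Tc := by
  intro T Tc
  have cx : Continuous fun q : (Fin n → ℝ) × (Fin n → ℝ) × ℝ => ∑ i, q.1 i :=
    continuous_finset_sum _ fun i _ => (continuous_apply i).comp continuous_fst
  have cz : Continuous fun q : (Fin n → ℝ) × (Fin n → ℝ) × ℝ => ∑ i, q.2.1 i :=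
    continuous_finset_sum _ fun i _ =>
      (continuous_apply i).comp (continuous_fst.comp continuous_snd)
  have ct : Continuous fun q : (Fin n → ℝ) × (Fin n → ℝ) × ℝ => q.2.2 :=
    continuous_snd.comp continuous_snd
  have hclosed : IsClosed Tc := by
    have hTc : Tc = (⋂ i, {q : (Fin n → ℝ) × (Fin n → ℝ) × ℝ | 0 ≤ q.2.1 i} ∩ {q | q.2.1 i ≤ 1})
        ∩ ({q | 0 ≤ q.2.2} ∩
          ({q | (∑ i, q.1 i) ^ 2 ≤ q.2.2 * min 1 (∑ i, q.2.1 i)} ∩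
           {q | (∑ i, q.2.1 i) ≤ (k : ℝ)})) := by
      ext q
      simp only [Tc, Set.mem_setOf_eq, Set.mem_inter_iff, Set.mem_iInter, forall_and]
    rw [hTc]
    refine ((isClosed_iInter fun i => IsClosed.inter ?_ ?_).inter
      (IsClosed.inter ?_ (IsClosed.inter ?_ ?_)))
    · exact isClosed_le continuous_const
        ((continuous_apply i).comp (continuous_fst.comp continuous_snd))
    · exact isClosed_le ((continuous_apply i).comp (continuous_fst.comp continuous_snd))
        continuous_const
    · exact isClosed_le continuous_const ct
    · exact isClosed_le (cx.pow 2) (ct.mul (continuous_const.min cz))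
    · exact isClosed_le cz continuous_const
  have hconv : Convex ℝ Tc := by
    rintro p ⟨hpz, hpt, hpkey, hpk⟩ q ⟨hqz, hqt, hqkey, hqk⟩ a b ha hb hab
    have hsmul1 : (∑ i, (a • p + b • q).1 i) = a * (∑ i, p.1 i) + b * (∑ i, q.1 i) := by
      simp [Finset.sum_add_distrib, Finset.mul_sum]
    have hsmul2 : (∑ i, (a • p + b • q).2.1 i) = a * (∑ i, p.2.1 i) + b * (∑ i, q.2.1 i) := by
      simp [Finset.sum_add_distrib, Finset.mul_sum]
    have hsp : 0 ≤ min 1 (∑ i, p.2.1 i) :=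
      le_min zero_le_one (Finset.sum_nonneg fun i _ => (hpz i).1)
    have hsq : 0 ≤ min 1 (∑ i, q.2.1 i) :=
      le_min zero_le_one (Finset.sum_nonneg fun i _ => (hqz i).1)
    have hminconc : a * min 1 (∑ i, p.2.1 i) + b * min 1 (∑ i, q.2.1 i)
        ≤ min 1 (∑ i, (a • p + b • q).2.1 i) := by
      rw [hsmul2]
      refine le_min ?_ ?_
      · calc a * min 1 (∑ i, p.2.1 i) + b * min 1 (∑ i, q.2.1 i)
            ≤ a * 1 + b * 1 := by
              gcongr <;> [exact min_le_left _ _; exact min_le_left _ _]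
          _ = 1 := by rw [mul_one, mul_one, hab]
      · gcongr <;> [exact min_le_right _ _; exact min_le_right _ _]
    refine ⟨fun i => ?_, ?_, ?_, ?_⟩
    · have h1 := (hpz i).1; have h2 := (hpz i).2
      have h3 := (hqz i).1; have h4 := (hqz i).2
      constructor
      · simp only [Prod.fst_add, Prod.snd_add, Prod.smul_fst, Prod.smul_snd, Pi.add_apply,
          Pi.smul_apply, smul_eq_mul]
        positivity
      · simp only [Prod.fst_add, Prod.snd_add, Prod.smul_fst, Prod.smul_snd, Pi.add_apply,
          Pi.smul_apply, smul_eq_mul]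
        nlinarith
    · have : (a • p + b • q).2.2 = a * p.2.2 + b * q.2.2 := by
        simp [smul_eq_mul]
      rw [this]; positivity
    · have hcone := cone_aux17 hpt hqt hsp hsq hpkey hqkey ha hb
      have h22 : (a • p + b • q).2.2 = a * p.2.2 + b * q.2.2 := by simp [smul_eq_mul]
      rw [hsmul1, h22]
      calc (a * (∑ i, p.1 i) + b * (∑ i, q.1 i)) ^ 2
          ≤ (a * p.2.2 + b * q.2.2) * (a * min 1 (∑ i, p.2.1 i) + b * min 1 (∑ i, q.2.1 i)) :=
            hcone
        _ ≤ (a * p.2.2 + b * q.2.2) * min 1 (∑ i, (a • p + b • q).2.1 i) := by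
            have : 0 ≤ a * p.2.2 + b * q.2.2 := by positivity
            exact mul_le_mul_of_nonneg_left hminconc this
    · rw [hsmul2]
      calc a * (∑ i, p.2.1 i) + b * (∑ i, q.2.1 i) ≤ a * k + b * k := by gcongr
        _ = k := by rw [← add_mul, hab, one_mul]
  have hsub : T ⊆ Tc := by
    rintro q ⟨hz01, ht, hzk, hx0⟩
    have hznn : ∀ i, 0 ≤ q.2.1 i ∧ q.2.1 i ≤ 1 := fun i => by
      rcases hz01 i with h | h <;> simp [h]
    have ht0 : 0 ≤ q.2.2 := le_trans (sq_nonneg _) ht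
    refine ⟨hznn, ht0, ?_, hzk⟩
    by_cases hall : ∀ i, q.2.1 i = 0
    · have hx : ∀ i, q.1 i = 0 := fun i => hx0 i (hall i)
      have : (∑ i, q.1 i) = 0 := Finset.sum_eq_zero fun i _ => hx i
      rw [this]
      have hm : 0 ≤ min 1 (∑ i, q.2.1 i) :=
        le_min zero_le_one (Finset.sum_nonneg fun i _ => (hznn i).1)
      nlinarith [mul_nonneg ht0 hm]
    · push_neg at hall
      obtain ⟨i, hi⟩ := hall
      have hzi : q.2.1 i = 1 := (hz01 i).resolve_left hi
      have hsum1 : (1 : ℝ) ≤ ∑ j, q.2.1 j := by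
        calc (1 : ℝ) = q.2.1 i := hzi.symm
          _ ≤ ∑ j, q.2.1 j :=
            Finset.single_le_sum (fun j _ => (hznn j).1) (Finset.mem_univ i)
      rw [min_eq_left hsum1, mul_one]
      exact ht
  exact ⟨hclosed, hconv, hsub,
    closure_minimal (convexHull_min hsub hconv) hclosed⟩
end
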